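/- arXiv:1910.10074 — 5 statements merged into one kernel-verified Lean document; each statement's English description precedes it below -/
import Mathlib

section
/- For every integer k ≥ 3 and every ε ∈ (0, 1/12], setting N = ⌊1/(12ε)⌋, one has d(k,ε) ≥ log(r_k(N)) / log(12N). -/
open Set MeasureTheory
open scoped ENNReal

/-- A set `E ⊆ ℝ` `ε`-avoids `k`-term arithmetic progressions: for every `k`-AP
`P = {a + i·lam : 0 ≤ i < k}` with gap `lam > 0`, `sup_{p ∈ P} inf_{x ∈ E} |x - p| ≥ ε·lam`,
i.e. some point of `P` is at distance at least `ε·lam` from every point of `E`. -/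
def Avoids (k : ℕ) (ε : ℝ) (E : Set ℝ) : Prop :=
  ∀ a lam : ℝ, 0 < lam → ∃ i : ℕ, i < k ∧ ∀ x ∈ E, ε * lam ≤ |x - (a + i * lam)|

/-- `A` contains a `k`-term arithmetic progression of integers (gap `d ≥ 1`). -/
def ContainsAPNat (k : ℕ) (A : Finset ℕ) : Prop :=
  ∃ a d : ℕ, 1 ≤ d ∧ ∀ i : ℕ, i < k → a + i * d ∈ A

/-- `rk k N` is the maximal cardinality of a subset of `{1, …, N}` without
`k`-term arithmetic progressions. -/
noncomputable def rk (k N : ℕ) : ℕ :=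
  sSup {m : ℕ | ∃ A : Finset ℕ, A ⊆ Finset.Icc 1 N ∧ ¬ ContainsAPNat k A ∧ A.card = m}

/-- `d(k, ε)`: the supremum of Hausdorff dimensions of bounded sets `ε`-avoiding `k`-APs. -/
noncomputable def dAvoid (k : ℕ) (ε : ℝ) : ℝ≥0∞ :=
  ⨆ (E : Set ℝ) (_ : Bornology.IsBounded E ∧ Avoids k ε E), dimH E

/-!
Let `N = ⌊1/(12ε)⌋`, let `A ⊆ {1, …, N}` be a largest set without `k`-APs, and let `E` be the set
of reals whose base-`12N` digits all lie in `12A - 6`.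

Replacing each digit `12a - 6` by the rank of `a` in `A` and reading the result in base `|A|` maps
`E` onto `[0, 1]`. Distinct digits of `E` differ by at least `12`, which makes this map Hölder of
exponent `log |A| / log 12N`; hence `dim E ≥ log |A| / log 12N`.

Suppose every term of a `k`-AP of gap `λ` lies within `ελ ≤ λ/12N` of `E`. Scale by the power
`(12N)^(n+1)` that brings the gap to `μ ∈ (2, 24N]`. The integer parts of the scaled nearby points
are `≡ 6 (mod 12)` and within `3` of an AP of gap `μ`, so they form an AP themselves, whose gap is
positive (as `k ≥ 3`) and below `24N + 6`. Such a gap leaves the first `n` digits unchanged, so the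
`(n+1)`-st digits form a `k`-AP in `12A - 6`, i.e. `A` contains a `k`-AP.
-/

open scoped NNReal

section Digits

variable {b : ℕ}

def digitPrefix (δ : ℕ → Fin b) : ℕ → ℕ
  | 0 => 0
  | n + 1 => b * digitPrefix δ n + δ n

lemma natCast_mul_ofDigits (δ : ℕ → Fin b) :
    (b : ℝ) * Real.ofDigits δ = δ 0 + Real.ofDigits (fun i ↦ δ (i + 1)) := by
  have hb : (b : ℝ) ≠ 0 := by exact_mod_cast (Fin.pos (δ 0)).ne'
  rw [Real.ofDigits_eq_sum_add_ofDigits δ 1]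
  simp only [Finset.range_one, Real.ofDigitsTerm, Finset.sum_singleton, zero_add, pow_one]
  field_simp

lemma pow_mul_ofDigits (δ : ℕ → Fin b) (n : ℕ) :
    (b : ℝ) ^ n * Real.ofDigits δ = digitPrefix δ n + Real.ofDigits (fun i ↦ δ (i + n)) := by
  induction n with
  | zero => simp [digitPrefix]
  | succ n ih =>
    have h := natCast_mul_ofDigits (fun i ↦ δ (i + n))
    simp only [zero_add, add_assoc, add_comm 1 n] at h
    rw [pow_succ', mul_assoc, ih, mul_add, h, digitPrefix]
    push_cast
    ring

lemma abs_digitPrefix_sub_lt (δ : ℕ → Fin b) (n : ℕ) {p s : ℝ}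
    (h : |Real.ofDigits δ - p| < s) : |(digitPrefix δ n : ℝ) - b ^ n * p| < b ^ n * s + 1 := by
  have hb : (0 : ℝ) < b ^ n := by have := Fin.pos (δ 0); positivity
  have hscaled : |(b : ℝ) ^ n * (Real.ofDigits δ - p)| < b ^ n * s := by
    rw [abs_mul, abs_of_pos hb]
    exact mul_lt_mul_of_pos_left h hb
  have hx := pow_mul_ofDigits δ n
  have := Real.ofDigits_nonneg (fun i ↦ δ (i + n))
  have := Real.ofDigits_le_one (fun i ↦ δ (i + n))
  rw [abs_lt] at hscaled ⊢
  constructor <;> nlinarith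

lemma digitPrefix_modEq {q : ℕ} {δ δ' : ℕ → Fin b} (h : ∀ j, (δ j : ℕ) ≡ δ' j [MOD q])
    (n : ℕ) : digitPrefix δ n ≡ digitPrefix δ' n [MOD q] := by
  induction n with
  | zero => rfl
  | succ n ih => exact (ih.mul_left b).add (h n)

lemma digitPrefix_congr {δ δ' : ℕ → Fin b} {n : ℕ} (h : ∀ i < n, δ i = δ' i) :
    digitPrefix δ n = digitPrefix δ' n := by
  induction n with
  | zero => rfl
  | succ n ih => simp only [digitPrefix, ih fun i hi ↦ h i (by omega), h n (by omega)]

lemma inv_pow_succ_le_abs_ofDigits_sub {δ δ' : ℕ → Fin b} {n : ℕ}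
    (hagree : ∀ i < n, δ i = δ' i) (hgap : 2 ≤ |(δ n : ℝ) - δ' n|) :
    ((b : ℝ) ^ (n + 1))⁻¹ ≤ |Real.ofDigits δ - Real.ofDigits δ'| := by
  have hb : (0 : ℝ) < b ^ (n + 1) := by have := Fin.pos (δ 0); positivity
  set t := Real.ofDigits (fun i ↦ δ (i + (n + 1))) - Real.ofDigits (fun i ↦ δ' (i + (n + 1)))
  have key : (b : ℝ) ^ (n + 1) * (Real.ofDigits δ - Real.ofDigits δ') = (δ n - δ' n) + t := by
    rw [mul_sub, pow_mul_ofDigits, pow_mul_ofDigits, digitPrefix, digitPrefix,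
      digitPrefix_congr hagree]
    push_cast
    ring
  have ht : |t| ≤ 1 := by simpa using Real.abs_ofDigits_sub_ofDigits_le (n := 0) (by simp)
  rw [inv_le_iff_one_le_mul₀' hb, ← abs_of_pos hb, ← abs_mul, key]
  have h := abs_sub ((δ n : ℝ) - δ' n + t) t
  rw [add_sub_cancel_right] at h
  linarith

end Digits

section Dimension

lemma abs_ofDigits_sub_le_mul_rpow {r M : ℕ} (hM : 1 < M) {c : Fin r → Fin M}
    (hc : Pairwise fun i j ↦ 2 ≤ |(c i : ℝ) - c j|) (τ τ' : ℕ → Fin r) :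
    |Real.ofDigits τ - Real.ofDigits τ'|
      ≤ r * |Real.ofDigits (c ∘ τ) - Real.ofDigits (c ∘ τ')| ^ Real.logb M r := by
  have hr : (1 : ℝ) ≤ r := by exact_mod_cast Fin.pos (τ 0)
  have hM' : (1 : ℝ) < M := by exact_mod_cast hM
  by_cases hτ : τ = τ'
  · subst hτ
    simp only [sub_self, abs_zero]
    positivity
  have hex : ∃ i, τ i ≠ τ' i := Function.ne_iff.1 hτ
  set n := Nat.find hex
  have hagree : ∀ i < n, τ i = τ' i := fun i hi ↦ not_not.1 (Nat.find_min hex hi)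
  have hsep : ((M : ℝ) ^ (n + 1))⁻¹ ≤ |Real.ofDigits (c ∘ τ) - Real.ofDigits (c ∘ τ')| :=
    inv_pow_succ_le_abs_ofDigits_sub (fun i hi ↦ by simp [hagree i hi]) (hc (Nat.find_spec hex))
  calc |Real.ofDigits τ - Real.ofDigits τ'| ≤ ((r : ℝ) ^ n)⁻¹ :=
        Real.abs_ofDigits_sub_ofDigits_le hagree
    _ = r * (((M : ℝ) ^ (n + 1))⁻¹) ^ Real.logb M r := by
        rw [Real.inv_rpow (by positivity), ← Real.rpow_pow_comm (by positivity),
          Real.rpow_logb (by positivity) hM'.ne' (by positivity), pow_succ]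
        field_simp
    _ ≤ r * |Real.ofDigits (c ∘ τ) - Real.ofDigits (c ∘ τ')| ^ Real.logb M r := by
        gcongr
        exact Real.logb_nonneg hM' hr

theorem dimH_range_le_of_edist_le {ι X Y : Type*} [EMetricSpace X] [EMetricSpace Y]
    {π : ι → X} {ρ : ι → Y} {C r : ℝ≥0} (hr : 0 < r)
    (h : ∀ a b, edist (ρ a) (ρ b) ≤ C * edist (π a) (π b) ^ (r : ℝ)) :
    dimH (range ρ) ≤ dimH (range π) / r := by
  rcases isEmpty_or_nonempty ι with hι | hι
  · simp [range_eq_empty]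
  have hρ : ∀ a b, π a = π b → ρ a = ρ b := fun a b hab ↦ by
    simpa [hab, ENNReal.zero_rpow_of_pos (NNReal.coe_pos.2 hr)] using h a b
  have hHolder : HolderOnWith C r (ρ ∘ Function.invFun π) (range π) := by
    rintro _ ⟨a, rfl⟩ _ ⟨b, rfl⟩
    simpa only [Function.comp_apply, Function.invFun_eq ⟨a, rfl⟩, Function.invFun_eq ⟨b, rfl⟩]
      using h (Function.invFun π (π a)) (Function.invFun π (π b))
  calc dimH (range ρ) ≤ dimH ((ρ ∘ Function.invFun π) '' range π) := by
        refine dimH_mono ?_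
        rintro _ ⟨a, rfl⟩
        exact ⟨π a, mem_range_self a, hρ _ _ (Function.invFun_eq ⟨a, rfl⟩)⟩
    _ ≤ dimH (range π) / r := hHolder.dimH_image_le hr

lemma one_le_dimH_range_ofDigits {r : ℕ} (hr : 1 < r) :
    1 ≤ dimH (range (Real.ofDigits (b := r))) :=
  calc (1 : ℝ≥0∞) = dimH (Icc (0 : ℝ) 1) := by
        rw [Real.dimH_of_nonempty_interior (by simp), Module.finrank_self, Nat.cast_one]
    _ ≤ dimH (range (Real.ofDigits (b := r))) :=
        dimH_mono (Real.ofDigits_SurjOn hr).subset_range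

theorem logb_le_dimH_range_ofDigits_comp {r M : ℕ} (hr : 1 < r) (hM : 1 < M)
    {c : Fin r → Fin M} (hc : Pairwise fun i j ↦ 2 ≤ |(c i : ℝ) - c j|) :
    ENNReal.ofReal (Real.logb M r) ≤ dimH (range fun τ : ℕ → Fin r ↦ Real.ofDigits (c ∘ τ)) := by
  set α := Real.logb M r
  have hα : 0 < α := Real.logb_pos (by exact_mod_cast hM) (by exact_mod_cast hr)
  have hdim := dimH_range_le_of_edist_le (π := fun τ ↦ Real.ofDigits (c ∘ τ))
    (ρ := Real.ofDigits) (C := r) (r := α.toNNReal) (Real.toNNReal_pos.2 hα) fun τ τ' ↦ by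
      rw [edist_dist, edist_dist, Real.dist_eq, Real.dist_eq, Real.coe_toNNReal _ hα.le,
        ENNReal.ofReal_rpow_of_nonneg (abs_nonneg _) hα.le, ENNReal.coe_natCast,
        ← ENNReal.ofReal_natCast, ← ENNReal.ofReal_mul (by positivity)]
      exact ENNReal.ofReal_le_ofReal (abs_ofDigits_sub_le_mul_rpow hM hc τ τ')
  have := (one_le_dimH_range_ofDigits hr).trans hdim
  rwa [ENNReal.le_div_iff_mul_le (by simp [hα]) (by simp), one_mul] at this

end Dimension

section GapArithmetic

lemma Int.eq_of_modEq_of_abs_sub_lt {n a b : ℤ} (h : a ≡ b [ZMOD n]) (hab : |a - b| < n) :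
    a = b :=
  sub_eq_zero.1 (Int.eq_zero_of_abs_lt_dvd h.symm.dvd hab)

variable {k : ℕ} {m : ℕ → ℤ} {c μ η : ℝ}

lemma sub_eq_sub_of_near_ap (hm : ∀ i < k, m i ≡ m 0 [ZMOD 12]) (hη : η ≤ 3)
    (hnear : ∀ i < k, |(m i : ℝ) - (c + i * μ)| < η) {i : ℕ} (hi : i + 1 < k) :
    m (i + 1) - m i = m 1 - m 0 := by
  have hgap : ∀ j, j + 1 < k → |((m (j + 1) - m j : ℤ) : ℝ) - μ| < 2 * η := fun j hj ↦ by
    have h₁ := hnear (j + 1) hj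
    have h₀ := hnear j (by omega)
    push_cast at h₁ ⊢
    rw [abs_lt] at h₀ h₁ ⊢
    constructor <;> linarith
  have hmod : m (i + 1) - m i ≡ m 1 - m 0 [ZMOD 12] := by
    have := hm (i + 1) hi
    have := hm i (by omega)
    have := hm 1 (by omega)
    unfold Int.ModEq at *
    omega
  refine Int.eq_of_modEq_of_abs_sub_lt hmod ?_
  -- both gaps lie within `2η ≤ 6` of `μ`
  have h₁ := hgap i hi
  have h₀ := hgap 0 (by omega)
  have : |((m (i + 1) - m i - (m 1 - m 0) : ℤ) : ℝ)| < 12 := by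
    push_cast at h₀ h₁ ⊢
    rw [abs_lt] at h₀ h₁ ⊢
    constructor <;> linarith
  exact_mod_cast this

lemma exists_ap_of_near_ap (hk : 3 ≤ k) (hm : ∀ i < k, m i ≡ m 0 [ZMOD 12]) (hμ : 2 < μ)
    (hη3 : η ≤ 3) (hημ : η ≤ μ / 12 + 1) (hnear : ∀ i < k, |(m i : ℝ) - (c + i * μ)| < η) :
    0 < m 1 - m 0 ∧ ((m 1 - m 0 : ℤ) : ℝ) < μ + 2 * η ∧
      ∀ i, i + 1 < k → m (i + 1) - m i = m 1 - m 0 := by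
  have h₀ := hnear 0 (by omega)
  have h₁ := hnear 1 (by omega)
  have h₂ := hnear 2 (by omega)
  rw [abs_lt] at h₀ h₁ h₂
  push_cast at h₀ h₁ h₂
  refine ⟨?_, by push_cast; linarith, fun i hi ↦ sub_eq_sub_of_near_ap hm hη3 hnear hi⟩
  -- the gap is a multiple of `12` exceeding `-12`, and it vanishing would force `2μ < 2η`
  have hne : m 1 - m 0 ≠ 0 := by
    intro h0
    have h21 : m 2 - m 1 = m 1 - m 0 := sub_eq_sub_of_near_ap hm hη3 hnear (i := 1) (by omega)
    have : ((m 2 : ℤ) : ℝ) = m 0 := by exact_mod_cast (show m 2 = m 0 by omega)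
    linarith
  have : (-12 : ℝ) < ((m 1 - m 0 : ℤ) : ℝ) := by push_cast; linarith
  have : -12 < m 1 - m 0 := by exact_mod_cast this
  have := hm 1 (by omega)
  unfold Int.ModEq at this
  omega

end GapArithmetic

-- the digits are the numbers `12a - 6` with `a ∈ A`, written without truncated subtraction
def cantorDigits (N : ℕ) (A : Finset ℕ) : Set (ℕ → Fin (12 * N)) :=
  {δ | ∀ j, ∃ a ∈ A, (δ j : ℕ) + 6 = 12 * a}

def cantorSetOf (N : ℕ) (A : Finset ℕ) : Set ℝ :=
  Real.ofDigits '' cantorDigits N A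

section CantorSet

variable {k N : ℕ} {A : Finset ℕ} {δ δ' : ℕ → Fin (12 * N)}

lemma isBounded_cantorSetOf : Bornology.IsBounded (cantorSetOf N A) :=
  (Metric.isBounded_Icc (0 : ℝ) 1).subset <| by
    rintro _ ⟨δ, -, rfl⟩
    exact ⟨Real.ofDigits_nonneg δ, Real.ofDigits_le_one δ⟩

lemma exists_separated_coding (hA : A ⊆ Finset.Icc 1 N) :
    ∃ c : Fin A.card → Fin (12 * N), (Pairwise fun i j ↦ 2 ≤ |(c i : ℝ) - c j|) ∧
      ∀ τ : ℕ → Fin A.card, c ∘ τ ∈ cantorDigits N A := by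
  set e := A.orderEmbOfFin rfl
  have he : ∀ i, e i ∈ A ∧ 1 ≤ e i ∧ e i ≤ N := fun i ↦
    ⟨A.orderEmbOfFin_mem rfl i, Finset.mem_Icc.1 (hA (A.orderEmbOfFin_mem rfl i))⟩
  refine ⟨fun i ↦ ⟨12 * e i - 6, by have := he i; omega⟩, fun i j hij ↦ ?_,
    fun τ j ↦ ⟨e (τ j), (he (τ j)).1, by have := he (τ j); simp only [Function.comp_apply]; omega⟩⟩
  have := he i
  have := he j
  have := e.injective.ne hij
  have : (2 : ℤ) ≤ |((12 * e i - 6 : ℕ) : ℤ) - (12 * e j - 6 : ℕ)| := by rw [le_abs']; omega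
  exact_mod_cast this

theorem log_div_log_le_dimH_cantorSetOf (hA : A ⊆ Finset.Icc 1 N) :
    ENNReal.ofReal (Real.log A.card / Real.log (12 * N)) ≤ dimH (cantorSetOf N A) := by
  rcases le_or_gt A.card 1 with hr | hr
  · interval_cases A.card <;> simp
  have hM : 1 < 12 * N := by
    have := Finset.card_le_card hA
    rw [Nat.card_Icc, add_tsub_cancel_right] at this
    omega
  obtain ⟨c, hc, hcA⟩ := exists_separated_coding hA
  calc ENNReal.ofReal (Real.log A.card / Real.log (12 * N))
      = ENNReal.ofReal (Real.logb (12 * N : ℕ) A.card) := by push_cast; rw [Real.log_div_log]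
    _ ≤ dimH (range fun τ ↦ Real.ofDigits (c ∘ τ)) := logb_le_dimH_range_ofDigits_comp hr hM hc
    _ ≤ dimH (cantorSetOf N A) := dimH_mono (range_subset_iff.2 fun τ ↦ ⟨c ∘ τ, hcA τ, rfl⟩)

lemma digit_le_of_mem_cantorDigits (hA : A ⊆ Finset.Icc 1 N) (hδ : δ ∈ cantorDigits N A)
    (j : ℕ) : 6 ≤ (δ j : ℕ) ∧ (δ j : ℕ) + 6 ≤ 12 * N := by
  obtain ⟨a, ha, hδa⟩ := hδ j
  have := Finset.mem_Icc.1 (hA ha)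
  omega

lemma digitPrefix_modEq_of_mem_cantorDigits (hδ : δ ∈ cantorDigits N A)
    (hδ' : δ' ∈ cantorDigits N A) (n : ℕ) : digitPrefix δ n ≡ digitPrefix δ' n [MOD 12] :=
  digitPrefix_modEq (fun j ↦ by
    obtain ⟨a, -, ha⟩ := hδ j
    obtain ⟨a', -, ha'⟩ := hδ' j
    unfold Nat.ModEq
    omega) n

-- a gap below `24N + 6` cannot change the first `n` digits, whose prefixes agree mod `12`
lemma digit_eq_add_of_digitPrefix_sub_eq (hA : A ⊆ Finset.Icc 1 N) (hδ : δ ∈ cantorDigits N A)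
    (hδ' : δ' ∈ cantorDigits N A) {n : ℕ} {g : ℤ} (hg : 0 < g) (hgN : g < 24 * N + 6)
    (h : (digitPrefix δ' (n + 1) : ℤ) - digitPrefix δ (n + 1) = g) :
    ((δ' n : ℕ) : ℤ) = δ n + g := by
  obtain ⟨t, ht⟩ := Nat.modEq_iff_dvd.1 (digitPrefix_modEq_of_mem_cantorDigits hδ hδ' n)
  have hd := digit_le_of_mem_cantorDigits hA hδ n
  have hd' := digit_le_of_mem_cantorDigits hA hδ' n
  simp only [digitPrefix] at h
  push_cast at h ht
  have ht0 : t = 0 := by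
    rcases lt_trichotomy t 0 with h0 | h0 | h0
    · nlinarith
    · exact h0
    · nlinarith
  rw [ht0, mul_zero, sub_eq_zero] at ht
  rw [ht] at h
  linarith

lemma containsAPNat_of_digitPrefix_ap (hA : A ⊆ Finset.Icc 1 N) {n : ℕ} (hk : 2 ≤ k)
    {δ : ℕ → ℕ → Fin (12 * N)} (hδ : ∀ i < k, δ i ∈ cantorDigits N A) {g : ℤ} (hg : 0 < g)
    (hgN : g < 24 * N + 6)
    (hap : ∀ i, i + 1 < k →
      (digitPrefix (δ (i + 1)) (n + 1) : ℤ) - digitPrefix (δ i) (n + 1) = g) :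
    ContainsAPNat k A := by
  have hstep : ∀ i, i + 1 < k → ((δ (i + 1) n : ℕ) : ℤ) = δ i n + g := fun i hi ↦
    digit_eq_add_of_digitPrefix_sub_eq hA (hδ i (by omega)) (hδ (i + 1) hi) hg hgN (hap i hi)
  choose! a ha hδa using fun i hi ↦ hδ i hi n
  have h₀ := hδa 0 (by omega)
  have h₁ := hδa 1 (by omega)
  have h₀₁ : ((δ 1 n : ℕ) : ℤ) = δ 0 n + g := hstep 0 (by omega)
  have hsucc : ∀ i, i + 1 < k → a (i + 1) = a i + (a 1 - a 0) := fun i hi ↦ by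
    have := hstep i hi
    have := hδa i (by omega)
    have := hδa (i + 1) hi
    omega
  refine ⟨a 0, a 1 - a 0, by omega, fun i hi ↦ ?_⟩
  have hai : a i = a 0 + i * (a 1 - a 0) := by
    induction i with
    | zero => simp
    | succ i ih => rw [hsucc i hi, ih (by omega)]; ring
  exact hai ▸ ha i hi

lemma exists_pow_succ_mul_mem_Ioc {M lam : ℝ} (hM : 1 < M) (hlam : 0 < lam) (hlam2 : lam ≤ 2) :
    ∃ n : ℕ, 2 < M ^ (n + 1) * lam ∧ M ^ (n + 1) * lam ≤ 2 * M := by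
  obtain ⟨n, hn, hn1⟩ := exists_nat_pow_near ((one_le_div hlam).2 hlam2) hM
  rw [le_div_iff₀ hlam] at hn
  rw [div_lt_iff₀ hlam] at hn1
  exact ⟨n, hn1, by rw [pow_succ]; nlinarith⟩

theorem containsAPNat_of_near_cantorDigits (hk : 3 ≤ k) (hA : A ⊆ Finset.Icc 1 N)
    {δ : ℕ → ℕ → Fin (12 * N)} (hδ : ∀ i < k, δ i ∈ cantorDigits N A) {ε a lam : ℝ}
    (hε : ε * (12 * N) ≤ 1) (hlam : 0 < lam)
    (hnear : ∀ i < k, |Real.ofDigits (δ i) - (a + i * lam)| < ε * lam) :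
    ContainsAPNat k A := by
  have hN : 1 ≤ N := by have := Fin.pos (δ 0 0); omega
  set M : ℝ := ((12 * N : ℕ) : ℝ) with hMdef
  have hM' : M = 12 * N := by push_cast [hMdef]; ring
  have hM : 12 ≤ M := by rw [hM']; exact_mod_cast (by omega : 12 ≤ 12 * N)
  have hεlam : ε * lam ≤ lam / M := by
    rw [le_div_iff₀ (by positivity), hM']
    nlinarith
  have hlam2 : lam ≤ 2 := by
    have h₀ := hnear 0 (by omega)
    have h₁ := hnear 1 (by omega)
    have := Real.ofDigits_nonneg (δ 0)
    have := Real.ofDigits_le_one (δ 1)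
    have : lam / M ≤ lam / 12 := div_le_div_of_nonneg_left hlam.le (by norm_num) hM
    rw [abs_lt] at h₀ h₁
    push_cast at h₀ h₁
    linarith
  obtain ⟨n, hn1, hμM⟩ := exists_pow_succ_mul_mem_Ioc (by linarith : 1 < M) hlam hlam2
  set μ := M ^ (n + 1) * lam with hμ
  have hμM' : μ / M ≤ 2 := (div_le_iff₀ (by positivity)).2 (by linarith)
  have hμ12 : μ / M ≤ μ / 12 := div_le_div_of_nonneg_left (by positivity) (by norm_num) hM
  have hint : ∀ i < k, |((digitPrefix (δ i) (n + 1) : ℤ) : ℝ) - (M ^ (n + 1) * a + i * μ)|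
      < μ / M + 1 := fun i hi ↦ by
    have h := abs_digitPrefix_sub_lt (δ i) (n + 1) ((hnear i hi).trans_le hεlam)
    have : M ^ (n + 1) * (lam / M) = μ / M := by rw [hμ]; ring
    rw [← hMdef, this, mul_add, show M ^ (n + 1) * (i * lam) = i * μ by rw [hμ]; ring] at h
    exact_mod_cast h
  obtain ⟨hg0, hgμ, hap⟩ := exists_ap_of_near_ap (m := fun i ↦ (digitPrefix (δ i) (n + 1) : ℤ))
    hk (fun i hi ↦ Int.natCast_modEq_iff.2 <|
      digitPrefix_modEq_of_mem_cantorDigits (hδ i hi) (hδ 0 (by omega)) (n + 1))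
    hn1 (by linarith) (by linarith) hint
  refine containsAPNat_of_digitPrefix_ap hA (by omega) hδ hg0 ?_ hap
  have : (((digitPrefix (δ 1) (n + 1) : ℤ) - digitPrefix (δ 0) (n + 1) : ℤ) : ℝ)
      < ((24 * N + 6 : ℤ) : ℝ) := by
    push_cast at hgμ ⊢
    linarith
  exact_mod_cast this

theorem avoids_cantorSetOf (hk : 3 ≤ k) (hA : A ⊆ Finset.Icc 1 N) (hAP : ¬ ContainsAPNat k A)
    {ε : ℝ} (hε : ε * (12 * N) ≤ 1) : Avoids k ε (cantorSetOf N A) := by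
  intro a lam hlam
  by_contra! hnear
  obtain ⟨-, ⟨δ₀, hδ₀, -⟩, -⟩ := hnear 0 (by omega)
  have : ∀ i, ∃ δ ∈ cantorDigits N A,
      i < k → |Real.ofDigits δ - (a + i * lam)| < ε * lam := fun i ↦ by
    by_cases hi : i < k
    · obtain ⟨_, ⟨δ, hδ, rfl⟩, h⟩ := hnear i hi
      exact ⟨δ, hδ, fun _ ↦ h⟩
    · exact ⟨δ₀, hδ₀, fun h ↦ absurd h hi⟩
  choose δ hδ hδnear using this
  exact hAP (containsAPNat_of_near_cantorDigits hk hA (fun i _ ↦ hδ i) hε hlam hδnear)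

end CantorSet

lemma exists_card_eq_rk (k N : ℕ) (hk : 1 ≤ k) :
    ∃ A ⊆ Finset.Icc 1 N, ¬ ContainsAPNat k A ∧ A.card = rk k N := by
  set S := {m | ∃ A : Finset ℕ, A ⊆ Finset.Icc 1 N ∧ ¬ ContainsAPNat k A ∧ A.card = m}
  have hS : S.Nonempty :=
    ⟨0, ∅, Finset.empty_subset _, fun ⟨_, _, _, h⟩ ↦ by simpa using h 0 hk, rfl⟩
  have hSN : BddAbove S := ⟨N, by
    rintro _ ⟨A, hA, -, rfl⟩
    simpa using Finset.card_le_card hA⟩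
  exact Nat.sSup_mem hS hSN

lemma mul_floor_one_div_le_one (x : ℝ) : x * ⌊1 / x⌋₊ ≤ 1 := by
  rcases le_or_gt x 0 with hx | hx
  · nlinarith [Nat.cast_nonneg (α := ℝ) ⌊1 / x⌋₊]
  · calc x * ⌊1 / x⌋₊ ≤ x * (1 / x) := by gcongr; exact Nat.floor_le (by positivity)
      _ = 1 := by field_simp

theorem stmt0_general (k : ℕ) (hk : 3 ≤ k) (ε : ℝ) :
    ENNReal.ofReal
        (Real.log (rk k ⌊1 / (12 * ε)⌋₊) / Real.log (12 * ⌊1 / (12 * ε)⌋₊)) ≤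
      dAvoid k ε := by
  set N := ⌊1 / (12 * ε)⌋₊
  obtain ⟨A, hA, hAP, hcard⟩ := exists_card_eq_rk k N (by omega)
  have hε : ε * (12 * N) ≤ 1 := by linarith [mul_floor_one_div_le_one (12 * ε)]
  rw [← hcard]
  calc _ ≤ dimH (cantorSetOf N A) := log_div_log_le_dimH_cantorSetOf hA
    _ ≤ dAvoid k ε := le_iSup₂ (f := fun E (_ : Bornology.IsBounded E ∧ Avoids k ε E) ↦ dimH E)
        (cantorSetOf N A) ⟨isBounded_cantorSetOf, avoids_cantorSetOf hk hA hAP hε⟩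

theorem stmt0 (k : ℕ) (hk : 3 ≤ k) (ε : ℝ) (hε0 : 0 < ε) (hε : ε ≤ 1 / 12) :
    ENNReal.ofReal
        (Real.log (rk k ⌊1 / (12 * ε)⌋₊) / Real.log (12 * ⌊1 / (12 * ε)⌋₊)) ≤
      dAvoid k ε :=
  stmt0_general k hk ε
end

section
/- For every integer k ≥ 3 and every ε > 0 with 1/ε > k, one has d(k,ε) ≤ (1/2)·( log(r_k(⌊1/ε + 1⌋) + 1) / log(⌊1/ε + 1⌋) + 1 ). -/
/-!
With `N = ⌊1/ε + 1⌋` we have `ε N ≥ 1`. Cut an interval of length `δ` into `N²` pieces of length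
`δ / N²`, indexed `u + N v` with `u, v < N`. For fixed `u` these pieces are `N` apart in units of
`δ / N²`, so an `ε`-avoiding set `E` cannot meet `k` of them whose indices `v` form an arithmetic
progression: it meets at most `r_k(N)` for each `u`, hence at most `N r_k(N)` in all. Iterating,
`E` is covered by `(N r_k(N))^m` intervals of length `N^(-2m)` times its diameter, so `μH[s] E = 0`
as soon as `N r_k(N) < N^(2s)`; the exponent `s = (log (r_k(N) + 1) / log N + 1) / 2` gives
`N^(2s) = N (r_k(N) + 1)`.
-/

open Set MeasureTheory
open scoped ENNReal

open Filter Metric Bornology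
open scoped Topology

lemma card_le_rk {k N : ℕ} {A : Finset ℕ} (hA : A ⊆ Finset.Icc 1 N)
    (hAP : ¬ ContainsAPNat k A) : A.card ≤ rk k N := by
  refine le_csSup ⟨N, ?_⟩ ⟨A, hA, hAP, rfl⟩
  rintro m ⟨B, hB, -, rfl⟩
  simpa using Finset.card_le_card hB

lemma card_le_rk_of_subset_range {k N : ℕ} {A : Finset ℕ} (hA : A ⊆ Finset.range N)
    (hAP : ¬ ContainsAPNat k A) : A.card ≤ rk k N := by
  rw [← Finset.card_image_of_injective A (add_left_injective 1)]
  refine card_le_rk (fun v hv => ?_) ?_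
  · obtain ⟨w, hw, rfl⟩ := Finset.mem_image.1 hv
    have := Finset.mem_range.1 (hA hw)
    simp only [Finset.mem_Icc]
    omega
  · rintro ⟨a, d, hd, hAPimage⟩
    refine hAP ⟨a - 1, d, hd, fun i hi => ?_⟩
    obtain ⟨w, hw, hwi⟩ := Finset.mem_image.1 (hAPimage i hi)
    have ha : 1 ≤ a := by
      obtain ⟨w₀, -, hw₀⟩ := Finset.mem_image.1 (hAPimage 0 (by omega))
      omega
    convert hw using 1
    omega

noncomputable def subintervalsMeeting (E : Set ℝ) (n : ℕ) (c δ : ℝ) : Finset ℕ := by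
  classical
  exact (Finset.range n).filter fun t => (E ∩ Icc (c + t * δ) (c + t * δ + δ)).Nonempty

lemma mem_subintervalsMeeting {E : Set ℝ} {n : ℕ} {c δ : ℝ} {t : ℕ} :
    t ∈ subintervalsMeeting E n c δ ↔
      t < n ∧ (E ∩ Icc (c + t * δ) (c + t * δ + δ)).Nonempty := by
  classical
  simp [subintervalsMeeting]

lemma exists_lt_mem_Icc_add_mul {n : ℕ} {c δ x : ℝ} (hn : 0 < n) (hδ : 0 < δ)
    (hx : x ∈ Icc c (c + n * δ)) : ∃ t < n, x ∈ Icc (c + t * δ) (c + t * δ + δ) := by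
  have hfloor := Nat.floor_le (div_nonneg (sub_nonneg.2 hx.1) hδ.le)
  rcases lt_or_ge ⌊(x - c) / δ⌋₊ n with h | h
  · refine ⟨_, h, ?_, ?_⟩
    · nlinarith [(le_div_iff₀ hδ).1 hfloor]
    · nlinarith [(div_lt_iff₀ hδ).1 (Nat.lt_floor_add_one ((x - c) / δ))]
  · have hcast : ((n - 1 : ℕ) : ℝ) = n - 1 := by rw [Nat.cast_sub hn, Nat.cast_one]
    have hle : ((n - 1 : ℕ) : ℝ) ≤ (x - c) / δ :=
      le_trans (Nat.cast_le.2 (by omega)) hfloor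
    refine ⟨n - 1, by omega, ?_, ?_⟩
    · nlinarith [(le_div_iff₀ hδ).1 hle]
    · rw [hcast]; linarith [hx.2]

lemma exists_finset_cover_of_card_subintervalsMeeting_le {E : Set ℝ} {n M : ℕ} (hn : 0 < n)
    (hcount : ∀ c δ, 0 < δ → (subintervalsMeeting E n c δ).card ≤ M) (m : ℕ) :
    ∀ c L, 0 < L → ∃ S : Finset ℝ, S.card ≤ M ^ m ∧
      E ∩ Icc c (c + L) ⊆ ⋃ x ∈ S, Icc x (x + L / n ^ m) := by
  induction m with
  | zero =>
    intro c L _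
    exact ⟨{c}, by simp, fun x hx => by simpa using hx.2⟩
  | succ m ih =>
    intro c L hL
    have hδ : 0 < L / n := by positivity
    choose S hScard hScover using fun t : ℕ => ih (c + t * (L / n)) (L / n) hδ
    refine ⟨(subintervalsMeeting E n c (L / n)).biUnion S, ?_, ?_⟩
    · calc _ ≤ ∑ t ∈ subintervalsMeeting E n c (L / n), (S t).card := Finset.card_biUnion_le
        _ ≤ (subintervalsMeeting E n c (L / n)).card • M ^ m :=
          Finset.sum_le_card_nsmul _ _ _ fun t _ => hScard t
        _ ≤ M ^ (m + 1) := by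
          rw [smul_eq_mul, pow_succ']
          exact Nat.mul_le_mul_right _ (hcount c _ hδ)
    · rintro x ⟨hxE, hx⟩
      have hnL : c + n * (L / n) = c + L := by field_simp
      obtain ⟨t, htn, hxt⟩ := exists_lt_mem_Icc_add_mul hn hδ (hnL ▸ hx)
      have hmem : t ∈ subintervalsMeeting E n c (L / n) :=
        mem_subintervalsMeeting.2 ⟨htn, x, hxE, hxt⟩
      have hlen : L / n / n ^ m = L / n ^ (m + 1) := by rw [div_div, pow_succ']
      obtain ⟨y, hy, hxy⟩ := mem_iUnion₂.1 (hScover t ⟨hxE, hxt⟩)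
      exact mem_iUnion₂.2 ⟨y, Finset.mem_biUnion.2 ⟨t, hmem, hy⟩, hlen ▸ hxy⟩

lemma hausdorffMeasure_eq_zero_of_card_subintervalsMeeting_le {E : Set ℝ} {n M : ℕ} {s : ℝ}
    (hE : IsBounded E) (hn : 1 < n) (hMs : (M : ℝ) < (n : ℝ) ^ s)
    (hcount : ∀ c δ, 0 < δ → (subintervalsMeeting E n c δ).card ≤ M) : μH[s] E = 0 := by
  obtain ⟨R, hR, hER⟩ := hE.subset_closedBall_lt 0 0
  have hEIcc : E ⊆ Icc (-R) (-R + 2 * R) := fun x hx => by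
    have := hER hx
    rw [Real.closedBall_eq_Icc] at this
    constructor <;> linarith [this.1, this.2]
  have hL : 0 < 2 * R := by linarith
  choose S hScard hScover using fun m =>
    exists_finset_cover_of_card_subintervalsMeeting_le (by omega) hcount m (-R) (2 * R) hL
  set δ : ℕ → ℝ := fun m => 2 * R / n ^ m
  have hδ : ∀ m, 0 < δ m := fun m => by positivity
  have hns : 0 < (n : ℝ) ^ s := by positivity
  set q : ℝ := M / (n : ℝ) ^ s
  have hsum : ∀ m, ∑ x : S m, ediam (Icc (x : ℝ) (x + δ m)) ^ s
      ≤ ENNReal.ofReal ((2 * R) ^ s * q ^ m) := fun m => by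
    simp only [Real.ediam_Icc, add_sub_cancel_left, ENNReal.ofReal_rpow_of_pos (hδ m),
      Finset.sum_const, Finset.card_univ, Fintype.card_coe, nsmul_eq_mul]
    rw [← ENNReal.ofReal_natCast, ← ENNReal.ofReal_mul (by positivity)]
    refine ENNReal.ofReal_le_ofReal ?_
    calc ((S m).card : ℝ) * δ m ^ s ≤ (M : ℝ) ^ m * δ m ^ s := by
          gcongr
          exact_mod_cast hScard m
      _ = (2 * R) ^ s * q ^ m := by
          simp only [δ, q]
          rw [Real.div_rpow hL.le (by positivity), ← Real.rpow_pow_comm (by positivity), div_pow]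
          field_simp
  have hq : Tendsto (fun m : ℕ => ENNReal.ofReal ((2 * R) ^ s * q ^ m)) atTop (𝓝 0) := by
    simpa using ENNReal.tendsto_ofReal ((tendsto_pow_atTop_nhds_zero_of_lt_one
      (by positivity) ((div_lt_one hns).2 hMs)).const_mul ((2 * R) ^ s))
  have hδlim : Tendsto (fun m => ENNReal.ofReal (δ m)) atTop (𝓝 0) := by
    simpa using ENNReal.tendsto_ofReal (tendsto_const_nhds.div_atTop
      (tendsto_pow_atTop_atTop_of_one_lt (Nat.one_lt_cast.2 hn)))
  refine le_antisymm ?_ zero_le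
  calc μH[s] E ≤ liminf (fun m => ∑ x : S m, ediam (Icc (x : ℝ) (x + δ m)) ^ s) atTop :=
        Measure.hausdorffMeasure_le_liminf_sum s E _ hδlim _
          (Eventually.of_forall fun m x => by rw [Real.ediam_Icc, add_sub_cancel_left])
          (Eventually.of_forall fun m x hx => by
            obtain ⟨y, hy, hxy⟩ := mem_iUnion₂.1 (hScover m ⟨hx, hEIcc hx⟩)
            exact mem_iUnion.2 ⟨⟨y, hy⟩, hxy⟩)
    _ ≤ liminf (fun m : ℕ => ENNReal.ofReal ((2 * R) ^ s * q ^ m)) atTop :=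
        liminf_le_liminf (Eventually.of_forall hsum)
    _ = 0 := hq.liminf_eq

lemma dimH_le_ofReal_of_hausdorffMeasure_eq_zero {X : Type*} [EMetricSpace X]
    [MeasurableSpace X] [BorelSpace X] {E : Set X} {s : ℝ} (hs : 0 ≤ s) (h : μH[s] E = 0) :
    dimH E ≤ ENNReal.ofReal s :=
  dimH_le_of_hausdorffMeasure_ne_top (by rw [Real.coe_toNNReal s hs, h]; exact ENNReal.zero_ne_top)

/-- If all the pieces met `E`, the `k`-AP of their midpoints, of gap `D δ`, would lie within
`δ / 2 < ε D δ` of `E`. -/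
lemma Avoids.exists_forall_notMem_Icc {k : ℕ} {ε : ℝ} {E : Set ℝ} (hA : Avoids k ε E)
    {b δ D : ℝ} (hδ : 0 < δ) (hD : 0 < D) (hεD : 1 ≤ ε * D) :
    ∃ i < k, ∀ x ∈ E, x ∉ Icc (b + i * (D * δ)) (b + i * (D * δ) + δ) := by
  obtain ⟨i, hik, hfar⟩ := hA (b + δ / 2) (D * δ) (by positivity)
  refine ⟨i, hik, fun x hx hxI => ?_⟩
  have hclose : |x - (b + δ / 2 + i * (D * δ))| ≤ δ / 2 := by
    rw [abs_le]
    constructor <;> linarith [hxI.1, hxI.2]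
  nlinarith [hfar x hx]

lemma card_subintervalsMeeting_le_of_avoids {k N : ℕ} {ε : ℝ} {E : Set ℝ} (hA : Avoids k ε E)
    (hεN : 1 ≤ ε * N) {c δ : ℝ} (hδ : 0 < δ) :
    (subintervalsMeeting E (N ^ 2) c δ).card ≤ N * rk k N := by
  have hN : 0 < N := Nat.pos_of_ne_zero fun h => by simp [h] at hεN; linarith
  set T := subintervalsMeeting E (N ^ 2) c δ
  -- the pieces `u + N v` with `u` fixed are spaced `N δ ≥ δ / ε` apart
  set V : ℕ → Finset ℕ := fun u => (Finset.range N).filter fun v => u + N * v ∈ T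
  have hVfree : ∀ u, ¬ ContainsAPNat k (V u) := by
    rintro u ⟨a, d, hd, hAP⟩
    have hd' : (1 : ℝ) ≤ d := by exact_mod_cast hd
    obtain ⟨i, hik, hmiss⟩ := hA.exists_forall_notMem_Icc (b := c + (u + N * a) * δ) hδ
      (D := N * d) (by positivity) (by nlinarith)
    obtain ⟨-, x, hxE, hx⟩ := mem_subintervalsMeeting.1 (Finset.mem_filter.1 (hAP i hik)).2
    refine hmiss x hxE ?_
    convert hx using 2 <;> push_cast <;> ring
  have hTV : T ⊆ (Finset.range N).biUnion fun u => (V u).image (u + N * ·) := by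
    intro t ht
    have htN : t < N * N := sq N ▸ (mem_subintervalsMeeting.1 ht).1
    refine Finset.mem_biUnion.2 ⟨t % N, Finset.mem_range.2 (Nat.mod_lt _ hN), ?_⟩
    refine Finset.mem_image.2 ⟨t / N, Finset.mem_filter.2 ⟨?_, ?_⟩, Nat.mod_add_div t N⟩
    · exact Finset.mem_range.2 ((Nat.div_lt_iff_lt_mul hN).2 htN)
    · rwa [Nat.mod_add_div t N]
  calc T.card ≤ ∑ u ∈ Finset.range N, ((V u).image (u + N * ·)).card :=
        (Finset.card_le_card hTV).trans Finset.card_biUnion_le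
    _ ≤ (Finset.range N).card • rk k N := Finset.sum_le_card_nsmul _ _ _ fun u _ =>
        Finset.card_image_le.trans
          (card_le_rk_of_subset_range (Finset.filter_subset _ _) (hVfree u))
    _ = N * rk k N := by rw [Finset.card_range, smul_eq_mul]

lemma sq_rpow_half_mul_log_div_log_add_one {N a : ℝ} (hN : 1 < N) (ha : 0 < a) :
    (N ^ 2) ^ ((1 / 2) * (Real.log a / Real.log N + 1)) = N * a := by
  have hlogN : Real.log N ≠ 0 := (Real.log_pos hN).ne'
  rw [Real.rpow_def_of_pos (by positivity), Real.log_pow,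
    show (2 : ℕ) * Real.log N * ((1 / 2) * (Real.log a / Real.log N + 1))
      = Real.log N + Real.log a by field_simp; ring,
    Real.exp_add, Real.exp_log (by linarith), Real.exp_log ha]

lemma dimH_le_of_avoids {k N : ℕ} {ε : ℝ} {E : Set ℝ} (hN : 2 ≤ N) (hεN : 1 ≤ ε * N)
    (hE : IsBounded E) (hA : Avoids k ε E) :
    dimH E ≤ ENNReal.ofReal ((1 / 2) * (Real.log (rk k N + 1) / Real.log N + 1)) := by
  have hN1 : (1 : ℝ) < N := by exact_mod_cast hN
  have hlog : 0 ≤ Real.log (rk k N + 1) / Real.log N :=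
    div_nonneg (Real.log_nonneg (by simp)) (Real.log_pos hN1).le
  refine dimH_le_ofReal_of_hausdorffMeasure_eq_zero (by positivity)
    (hausdorffMeasure_eq_zero_of_card_subintervalsMeeting_le (M := N * rk k N) hE
      (by nlinarith) ?_ fun c δ hδ => card_subintervalsMeeting_le_of_avoids hA hεN hδ)
  rw [Nat.cast_pow, sq_rpow_half_mul_log_div_log_add_one hN1 (by positivity), Nat.cast_mul]
  nlinarith

theorem stmt2 (k : ℕ) (hk : 3 ≤ k) (ε : ℝ) (hε0 : 0 < ε) (hkε : (k : ℝ) < 1 / ε) :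
    dAvoid k ε ≤
      ENNReal.ofReal ((1 / 2) *
        (Real.log (rk k ⌊1 / ε + 1⌋₊ + 1) / Real.log (⌊1 / ε + 1⌋₊) + 1)) := by
  set N := ⌊1 / ε + 1⌋₊
  have hεN : 1 / ε < N := by linarith [Nat.sub_one_lt_floor (1 / ε + 1)]
  have hk3 : (3 : ℝ) ≤ k := by exact_mod_cast hk
  have hN : 2 ≤ N := by exact_mod_cast (show (2 : ℝ) ≤ N by linarith)
  refine iSup₂_le fun E hE => dimH_le_of_avoids hN ?_ hE.1 hE.2
  linarith [(div_lt_iff₀ hε0).1 hεN]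
end

section
/- For every fixed integer k ≥ 3, d(k,ε) tends to 1 as ε → 0⁺; that is, for every δ > 0 there exists ε₀ > 0 such that d(k,ε) > 1 − δ for all ε ∈ (0, ε₀). -/
open Set MeasureTheory
open scoped ENNReal

/-!
Behrend's construction gives a 3AP-free `A ⊆ [0, N)` with `#A ≥ N exp (-4 √(log N))`; let `E` be
the set of reals whose base-`8N` digits all lie in `A`. Digits below `N` make sums of two points of
`E` carry-free, so if `m` is the first position where the digits of `x₀ + x₂` and `2 x₁` differ
(`xᵢ ∈ E`), then `|x₀ + x₂ - 2 x₁| ≥ (8N)^{-(m+1)} / 2`, while 3AP-freeness makes the first `m`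
digits of `x₀` and `x₂` agree, so `|x₀ - x₂| ≤ (8N)^{-m}`. For `xᵢ` within `ελ` of `a + iλ` this
gives `2λ - 2ελ ≤ (8N)^{-m} < 64 N ελ`, impossible once `ε ≤ 1 / (64 N)`. Reading the digit
indices of a point of `E` in base `#A` maps `E` onto `[0, 1]`, Hölder with exponent
`log #A / log (8N)`; hence `dimH E` is at least this exponent, which tends to `1`.
-/

open Real Filter Topology
open scoped NNReal

lemma exists_forall_lt_and_not {p : ℕ → Prop} (h : ∃ n, ¬ p n) :
    ∃ m, (∀ j < m, p j) ∧ ¬ p m := by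
  classical
  exact ⟨Nat.find h, fun j hj => not_not.1 (Nat.find_min h hj), Nat.find_spec h⟩

theorem dimH_range_le_of_dist_le {ι X Y : Type*} [MetricSpace X] [MetricSpace Y] {C r : ℝ≥0}
    (hr : 0 < r) {Λ : ι → X} {φ : ι → Y}
    (h : ∀ i j, dist (φ i) (φ j) ≤ C * dist (Λ i) (Λ j) ^ (r : ℝ)) :
    dimH (range φ) ≤ dimH (range Λ) / r := by
  rcases isEmpty_or_nonempty ι with hι | hι
  · simp [range_eq_empty]
  have hfac (i : ι) : φ (Function.invFun Λ (Λ i)) = φ i := by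
    have := h (Function.invFun Λ (Λ i)) i
    rw [Function.invFun_eq (f := Λ) ⟨i, rfl⟩, dist_self, Real.zero_rpow (by positivity),
      mul_zero] at this
    exact dist_le_zero.1 this
  have hrange : range φ = (φ ∘ Function.invFun Λ) '' range Λ := by
    rw [← range_comp]; exact congrArg range (funext fun i => (hfac i).symm)
  rw [hrange]
  refine HolderOnWith.dimH_image_le (C := C) ?_ hr
  rintro _ ⟨i, rfl⟩ _ ⟨j, rfl⟩
  simp only [Function.comp, hfac]
  rw [edist_dist, edist_dist, ENNReal.ofReal_rpow_of_nonneg dist_nonneg r.coe_nonneg,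
    ← ENNReal.ofReal_coe_nnreal, ← ENNReal.ofReal_mul C.coe_nonneg]
  exact ENNReal.ofReal_le_ofReal (h i j)

lemma le_abs_tsum_int_mul_inv_pow {M : ℕ} (hM : 2 ≤ M) {u : ℕ → ℤ} (hu : ∀ j, 4 * |u j| ≤ M)
    {m : ℕ} (hzero : ∀ j < m, u j = 0) (hm : u m ≠ 0) :
    ((M : ℝ) ^ (m + 1))⁻¹ / 2 ≤ |∑' j, (u j : ℝ) * ((M : ℝ) ^ (j + 1))⁻¹| := by
  have hM' : (2 : ℝ) ≤ M := by exact_mod_cast hM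
  set x : ℝ := (M : ℝ)⁻¹
  have hx0 : 0 ≤ x := by positivity
  have hx : x ≤ 1 / 2 := by
    rw [inv_le_comm₀ (by positivity) (by norm_num)]; simpa using hM'
  have hMx : (M : ℝ) * x = 1 := mul_inv_cancel₀ (by positivity)
  have hbound (n j : ℕ) : ‖(u (j + n) : ℝ) * x ^ (j + n + 1)‖ ≤ M / 4 * x ^ (n + 1) * x ^ j := by
    have hu' : 4 * |(u (j + n) : ℝ)| ≤ M := by exact_mod_cast hu (j + n)
    rw [norm_mul, norm_pow, Real.norm_of_nonneg hx0, Real.norm_eq_abs,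
      show j + n + 1 = n + 1 + j by ring, pow_add, ← mul_assoc]
    gcongr
    linarith
  have hgeom (n : ℕ) : HasSum (fun j => M / 4 * x ^ (n + 1) * x ^ j)
      (M / 4 * x ^ (n + 1) * (1 - x)⁻¹) :=
    (hasSum_geometric_of_lt_one hx0 (by linarith)).mul_left _
  simp_rw [← inv_pow]
  have hs : Summable fun j => (u j : ℝ) * x ^ (j + 1) :=
    Summable.of_norm_bounded (hgeom 0).summable (hbound 0)
  rw [← hs.sum_add_tsum_nat_add (m + 1), Finset.sum_range_succ,
    Finset.sum_eq_zero fun j hj => by simp [hzero j (Finset.mem_range.1 hj)], zero_add]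
  have htail : |∑' j, (u (j + (m + 1)) : ℝ) * x ^ (j + (m + 1) + 1)| ≤ x ^ (m + 1) / 2 := by
    refine (tsum_of_norm_bounded (hgeom (m + 1)) (hbound (m + 1))).trans ?_
    have h1x : 1 - x ≠ 0 := by linarith
    have h : M / 4 * x ^ (m + 1 + 1) * (1 - x)⁻¹ = x ^ (m + 1) / (4 * (1 - x)) := by
      rw [pow_succ]; field_simp; linear_combination x ^ (m + 1) * hMx
    rw [h]
    exact div_le_div_of_nonneg_left (pow_nonneg hx0 _) (by norm_num) (by linarith)
  have hhead : x ^ (m + 1) ≤ |(u m : ℝ) * x ^ (m + 1)| := by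
    have h1 : (1 : ℝ) ≤ |(u m : ℝ)| := by exact_mod_cast Int.one_le_abs hm
    rw [abs_mul, abs_of_nonneg (pow_nonneg hx0 _)]
    exact le_mul_of_one_le_left (pow_nonneg hx0 _) h1
  have := abs_sub_abs_le_abs_add ((u m : ℝ) * x ^ (m + 1))
    (∑' j, (u (j + (m + 1)) : ℝ) * x ^ (j + (m + 1) + 1))
  linarith

namespace Real

lemma ofDigits_sub_ofDigits {M : ℕ} (x y : ℕ → Fin M) :
    ofDigits x - ofDigits y = ∑' j, (((x j : ℤ) - y j : ℤ) : ℝ) * ((M : ℝ) ^ (j + 1))⁻¹ := by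
  rw [ofDigits, ofDigits, ← summable_ofDigitsTerm.tsum_sub summable_ofDigitsTerm]
  congr with j
  simp only [ofDigitsTerm]
  push_cast
  ring

lemma ofDigits_add_ofDigits_sub_two_mul {M : ℕ} (x y z : ℕ → Fin M) :
    ofDigits x + ofDigits z - 2 * ofDigits y =
      ∑' j, (((x j : ℤ) + z j - 2 * y j : ℤ) : ℝ) * ((M : ℝ) ^ (j + 1))⁻¹ := by
  rw [ofDigits, ofDigits, ofDigits, ← summable_ofDigitsTerm.tsum_add summable_ofDigitsTerm,
    ← tsum_mul_left, ← (summable_ofDigitsTerm.add summable_ofDigitsTerm).tsum_sub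
      (summable_ofDigitsTerm.mul_left 2)]
  congr with j
  simp only [ofDigitsTerm]
  push_cast
  ring

variable {M : ℕ} {x y z : ℕ → Fin M} {m : ℕ}

lemma inv_pow_div_two_le_abs_ofDigits_sub (hM : 2 ≤ M) (hx : ∀ j, 8 * (x j : ℕ) ≤ M)
    (hy : ∀ j, 8 * (y j : ℕ) ≤ M) (hlt : ∀ j < m, x j = y j) (hm : x m ≠ y m) :
    ((M : ℝ) ^ (m + 1))⁻¹ / 2 ≤ |ofDigits x - ofDigits y| := by
  rw [ofDigits_sub_ofDigits]
  refine le_abs_tsum_int_mul_inv_pow hM (fun j => ?_) (fun j hj => by simp [hlt j hj]) ?_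
  · have := hx j; have := hy j
    rcases abs_cases ((x j : ℤ) - y j) with ⟨h, -⟩ | ⟨h, -⟩ <;> omega
  · exact sub_ne_zero.2 (by exact_mod_cast Fin.val_injective.ne hm)

lemma inv_pow_div_two_le_abs_ofDigits_add_sub_two_mul (hM : 2 ≤ M)
    (hx : ∀ j, 8 * (x j : ℕ) ≤ M) (hy : ∀ j, 8 * (y j : ℕ) ≤ M) (hz : ∀ j, 8 * (z j : ℕ) ≤ M)
    (hlt : ∀ j < m, (x j : ℕ) + z j = 2 * y j) (hm : (x m : ℕ) + z m ≠ 2 * y m) :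
    ((M : ℝ) ^ (m + 1))⁻¹ / 2 ≤ |ofDigits x + ofDigits z - 2 * ofDigits y| := by
  rw [ofDigits_add_ofDigits_sub_two_mul]
  refine le_abs_tsum_int_mul_inv_pow hM (fun j => ?_) (fun j hj => ?_) ?_
  · have := hx j; have := hy j; have := hz j
    rcases abs_cases ((x j : ℤ) + z j - 2 * y j) with ⟨h, -⟩ | ⟨h, -⟩ <;> omega
  · have := hlt j hj; omega
  · omega

end Real

section DigitCantorSet

variable {b M : ℕ}

def digitCantorSet (dig : Fin b → Fin M) : Set ℝ :=
  range fun c : ℕ → Fin b => ofDigits (dig ∘ c)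

lemma isBounded_digitCantorSet (dig : Fin b → Fin M) :
    Bornology.IsBounded (digitCantorSet dig) := by
  refine (Metric.isBounded_Icc (0 : ℝ) 1).subset ?_
  rintro _ ⟨c, rfl⟩
  exact ⟨ofDigits_nonneg _, ofDigits_le_one _⟩

variable {dig : Fin b → Fin M}

theorem avoids_digitCantorSet {k : ℕ} (hk : 3 ≤ k) (hM : 2 ≤ M)
    (hdig : ∀ i, 8 * (dig i : ℕ) ≤ M) (hinj : Function.Injective dig)
    (hAP : ThreeAPFree (range fun i => (dig i : ℕ))) {ε : ℝ} (hε : ε ≤ 1 / (8 * M)) :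
    Avoids k ε (digitCantorSet dig) := by
  intro a lam hlam
  by_contra! hclose
  obtain ⟨_, ⟨c₀, rfl⟩, h₀⟩ := hclose 0 (by omega)
  obtain ⟨_, ⟨c₁, rfl⟩, h₁⟩ := hclose 1 (by omega)
  obtain ⟨_, ⟨c₂, rfl⟩, h₂⟩ := hclose 2 (by omega)
  set e₀ := ofDigits (dig ∘ c₀)
  set e₁ := ofDigits (dig ∘ c₁)
  set e₂ := ofDigits (dig ∘ c₂)
  have hM' : (2 : ℝ) ≤ M := by exact_mod_cast hM
  have hεM : 8 * M * ε ≤ 1 := by rwa [le_div_iff₀' (by positivity)] at hε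
  have hε' : ε ≤ 1 / 16 := by nlinarith
  push_cast at h₀ h₁ h₂
  rw [abs_lt] at h₀ h₁ h₂
  have hsep : 2 * lam - 2 * (ε * lam) < |e₀ - e₂| := by
    rw [abs_sub_comm]; exact lt_of_lt_of_le (by linarith) (le_abs_self _)
  have hcomb : |e₀ + e₂ - 2 * e₁| < 4 * (ε * lam) := by
    rw [abs_lt]; constructor <;> linarith
  have hAP' : ∀ j, (dig (c₀ j) : ℕ) + dig (c₂ j) = 2 * dig (c₁ j) → c₀ j = c₂ j := by
    intro j h
    have := hAP (mem_range_self (c₀ j)) (mem_range_self (c₁ j)) (mem_range_self (c₂ j))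
      (by omega)
    exact hinj (Fin.ext (by omega))
  obtain ⟨m, hlt, hm⟩ := exists_forall_lt_and_not
    (p := fun j => (dig (c₀ j) : ℕ) + dig (c₂ j) = 2 * dig (c₁ j)) <| by
      by_contra! hall
      have he : e₀ = e₂ := by simp only [e₀, e₂, funext fun j => hAP' j (hall j)]
      rw [he, sub_self, abs_zero] at hsep
      nlinarith
  have hupper : |e₀ - e₂| ≤ ((M : ℝ) ^ m)⁻¹ :=
    abs_ofDigits_sub_ofDigits_le fun j hj => congrArg dig (hAP' j (hlt j hj))
  have hlower : ((M : ℝ) ^ m)⁻¹ * (M : ℝ)⁻¹ / 2 ≤ |e₀ + e₂ - 2 * e₁| := by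
    rw [← mul_inv, ← pow_succ]
    exact inv_pow_div_two_le_abs_ofDigits_add_sub_two_mul (x := dig ∘ c₀) (y := dig ∘ c₁)
      (z := dig ∘ c₂) hM (fun j => hdig _) (fun j => hdig _) (fun j => hdig _) hlt hm
  set t := ((M : ℝ) ^ m)⁻¹
  have ht : t < lam := by
    have : t * (M : ℝ)⁻¹ * M = t := by field_simp
    nlinarith
  nlinarith

lemma abs_ofDigits_sub_le_mul_abs_ofDigits_comp_sub_rpow (hM : 2 ≤ M)
    (hdig : ∀ i, 8 * (dig i : ℕ) ≤ M) (hinj : Function.Injective dig) {r : ℝ}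
    (hr : 0 ≤ r) (hMr : (M : ℝ) ^ r = b) (c c' : ℕ → Fin b) :
    |ofDigits c - ofDigits c'| ≤ b * 2 ^ r * |ofDigits (dig ∘ c) - ofDigits (dig ∘ c')| ^ r := by
  rcases eq_or_ne c c' with rfl | hne
  · simp only [sub_self, abs_zero]; positivity
  obtain ⟨m, hlt, hm⟩ := exists_forall_lt_and_not (p := fun j => c j = c' j)
    (by simpa [funext_iff] using hne)
  have hM0 : (0 : ℝ) ≤ M := M.cast_nonneg
  have hlower : ((M : ℝ) ^ (m + 1))⁻¹ / 2 ≤ |ofDigits (dig ∘ c) - ofDigits (dig ∘ c')| :=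
    inv_pow_div_two_le_abs_ofDigits_sub hM (fun j => hdig _) (fun j => hdig _)
      (fun j hj => congrArg dig (hlt j hj)) (hinj.ne hm)
  calc |ofDigits c - ofDigits c'|
      ≤ ((b : ℝ) ^ m)⁻¹ := abs_ofDigits_sub_ofDigits_le hlt
    _ = b * (((M : ℝ) ^ (m + 1))⁻¹) ^ r := by
      rw [Real.inv_rpow (by positivity), ← rpow_pow_comm hM0, hMr, pow_succ, mul_inv,
        mul_left_comm, mul_inv_cancel₀ (Nat.cast_pos.2 (c 0).pos).ne', mul_one]
    _ ≤ b * (2 * |ofDigits (dig ∘ c) - ofDigits (dig ∘ c')|) ^ r := by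
      gcongr; linarith
    _ = b * 2 ^ r * |ofDigits (dig ∘ c) - ofDigits (dig ∘ c')| ^ r := by
      rw [Real.mul_rpow (by norm_num) (abs_nonneg _), mul_assoc]

theorem ofReal_logb_le_dimH_digitCantorSet (hM : 2 ≤ M) (hdig : ∀ i, 8 * (dig i : ℕ) ≤ M)
    (hinj : Function.Injective dig) :
    ENNReal.ofReal (logb M b) ≤ dimH (digitCantorSet dig) := by
  have hM1 : (1 : ℝ) < M := by exact_mod_cast hM
  rcases lt_or_ge b 2 with hb | hb
  · have hb1 : (b : ℝ) ≤ 1 := by exact_mod_cast (by omega : b ≤ 1)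
    rw [ENNReal.ofReal_eq_zero.2 (logb_nonpos hM1 b.cast_nonneg hb1)]
    exact bot_le
  have hb1 : (1 : ℝ) < b := by exact_mod_cast hb
  set r : ℝ≥0 := ⟨logb M b, (logb_pos hM1 hb1).le⟩
  have hr : 0 < r := logb_pos hM1 hb1
  have hMr : (M : ℝ) ^ (r : ℝ) = b := rpow_logb (by positivity) hM1.ne' (by positivity)
  have hdim := dimH_range_le_of_dist_le (C := ⟨b * 2 ^ (r : ℝ), by positivity⟩) hr
    (Λ := fun c : ℕ → Fin b => ofDigits (dig ∘ c)) (φ := ofDigits)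
    (fun c c' => abs_ofDigits_sub_le_mul_abs_ofDigits_comp_sub_rpow hM hdig hinj r.2 hMr c c')
  have hIcc : dimH (Icc (0 : ℝ) 1) = 1 := by
    rw [Real.dimH_of_nonempty_interior] <;> simp
  have h1 : 1 ≤ dimH (range (ofDigits (b := b))) := by
    rw [← hIcc]
    exact dimH_mono fun y hy => by simpa using ofDigits_SurjOn hb hy
  show ENNReal.ofReal (r : ℝ) ≤ _
  have h := h1.trans hdim
  rwa [ENNReal.le_div_iff_mul_le (.inl (by exact_mod_cast hr.ne')) (.inl ENNReal.coe_ne_top),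
    one_mul, ← ENNReal.ofReal_coe_nnreal] at h

end DigitCantorSet

lemma eventually_lt_logb_rothNumberNat {r : ℝ} (hr : r < 1) :
    ∀ᶠ N : ℕ in atTop, r < logb (8 * N) (rothNumberNat N) := by
  have hg : Tendsto (fun L : ℝ => (L - 4 * √L) / (log 8 + L)) atTop (𝓝 1) := by
    have h : Tendsto (fun L => (1 - 4 * (√L)⁻¹) / (log 8 * L⁻¹ + 1)) atTop
        (𝓝 ((1 - 4 * 0) / (log 8 * 0 + 1))) :=
      (tendsto_const_nhds.sub ((tendsto_inv_atTop_zero.comp tendsto_sqrt_atTop).const_mul 4)).div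
        ((tendsto_inv_atTop_zero.const_mul _).add_const 1) (by norm_num)
    refine Tendsto.congr' ?_ (by simpa using h)
    filter_upwards [eventually_gt_atTop 0] with L hL
    have : √L ≠ 0 := (sqrt_pos.2 hL).ne'
    field_simp
    linear_combination (4 : ℝ) * sq_sqrt hL.le
  have hlog : Tendsto (fun N : ℕ => log N) atTop atTop :=
    tendsto_log_atTop.comp tendsto_natCast_atTop_atTop
  filter_upwards [(hg.comp hlog).eventually (lt_mem_nhds hr), eventually_ge_atTop 1]
    with N hN hN1
  have hN' : (1 : ℝ) ≤ N := by exact_mod_cast hN1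
  refine hN.trans_le ?_
  rw [logb, log_mul (by norm_num) (by positivity)]
  refine div_le_div_of_nonneg_right ?_ (add_nonneg (log_nonneg (by norm_num)) (log_nonneg hN'))
  calc log N - 4 * √(log N) = log (N * exp (-4 * √(log N))) := by
        rw [log_mul (by positivity) (exp_pos _).ne', log_exp]; ring
    _ ≤ log (rothNumberNat N) := log_le_log (by positivity) Behrend.roth_lower_bound

theorem ofReal_logb_card_le_dAvoid {k N : ℕ} (hk : 3 ≤ k) (hN : 1 ≤ N) {A : Finset ℕ}
    (hAN : A ⊆ Finset.range N) (hA : ThreeAPFree (A : Set ℕ)) {ε : ℝ} (hε : ε ≤ 1 / (64 * N)) :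
    ENNReal.ofReal (logb (8 * N) A.card) ≤ dAvoid k ε := by
  have hlt (i : Fin A.card) : A.orderEmbOfFin rfl i < N :=
    Finset.mem_range.1 (hAN (A.orderEmbOfFin_mem rfl i))
  let dig : Fin A.card → Fin (8 * N) := fun i => ⟨A.orderEmbOfFin rfl i, by linarith [hlt i]⟩
  have hdig (i : Fin A.card) : 8 * (dig i : ℕ) ≤ 8 * N := Nat.mul_le_mul_left 8 (hlt i).le
  have hinj : Function.Injective dig := fun i j h =>
    (A.orderEmbOfFin rfl).injective (congrArg Fin.val h)
  have hAP : ThreeAPFree (range fun i => (dig i : ℕ)) := by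
    show ThreeAPFree (range (A.orderEmbOfFin rfl)); rwa [Finset.range_orderEmbOfFin]
  calc ENNReal.ofReal (logb (8 * N) A.card) ≤ dimH (digitCantorSet dig) := by
        simpa using ofReal_logb_le_dimH_digitCantorSet (by omega) hdig hinj
    _ ≤ dAvoid k ε := le_iSup₂_of_le (digitCantorSet dig)
        ⟨isBounded_digitCantorSet dig, avoids_digitCantorSet hk (by omega) hdig hinj hAP
          (hε.trans_eq (by push_cast; ring))⟩ le_rfl

theorem stmt5 (k : ℕ) (hk : 3 ≤ k) :
    ∀ δ : ℝ, 0 < δ → ∃ ε₀ : ℝ, 0 < ε₀ ∧ ∀ ε : ℝ, 0 < ε → ε < ε₀ →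
      ENNReal.ofReal (1 - δ) < dAvoid k ε := by
  intro δ hδ
  obtain ⟨N, hlt, hN⟩ := ((eventually_lt_logb_rothNumberNat
    (max_lt (by linarith) one_pos : max (1 - δ) 0 < 1)).and (eventually_ge_atTop 1)).exists
  obtain ⟨A, hAN, hcard, hA⟩ := rothNumberNat_spec N
  refine ⟨1 / (64 * N), by positivity, fun ε _ hε => ?_⟩
  refine lt_of_lt_of_le ?_ (ofReal_logb_card_le_dAvoid hk hN hAN hA hε.le)
  rw [hcard, ENNReal.ofReal_lt_ofReal_iff']
  exact ⟨(le_max_left _ _).trans_lt hlt, (le_max_right _ _).trans_lt hlt⟩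
end

section
/- For every integer k ≥ 3 and every ε ∈ (0,1), the supremum defining d(k,ε) is attained: there exists a compact set E ⊆ [0,1] that ε-avoids k-APs and satisfies dim_H(E) = d(k,ε). -/
/-!
If `1 / 2 ≤ ε` and `k ≤ 4`, no nonempty perfect set `ε`-avoids `k`-APs: near two of its points
it contains pairs `p₁ < p₂` and `q₁ < q₂`, and the 4-AP with terms `(p₁ + p₂) / 2 ± λ / 2`,
`(q₁ + q₂) / 2 ± λ / 2` has every term within `λ / 2` of the set. By Cantor–Bendixson every
avoiding set then has countable closure, so `d(k, ε) = 0` and the empty set attains it.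

Otherwise there is `m ∈ {1, 2}` with `2ε < m` and `2m < k`. Take compact `Gₙ ⊆ [0, 1]` avoiding
`k`-APs with `sup dim_H Gₙ = d(k, ε)` and place the shrunken copies `Kₙ = tⁿ⁺¹ + tⁿ⁺² Gₙ`
towards `0`. The compact set `{0} ∪ ⋃ Kₙ` has dimension `sup dim_H Gₙ`, and it avoids `k`-APs:
let `Kₙ` be the first copy that an AP of gap `λ` comes `ελ`-close to. If `λ` is small against
`tⁿ⁺¹`, the term of the AP that avoids `Kₙ` lies far above everything closer to `0`. If `λ` is
large, both `Kₙ` and `[0, 2tⁿ⁺²]` have `ελ`-neighbourhoods of length at most `mλ`, which contain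
at most `2m < k` terms between them.
-/

open Set MeasureTheory
open scoped ENNReal

open Filter Topology

-- `Avoids k ε E` unfolds to `∀ a lam, 0 < lam → ∃ i < k, TermAvoids ε a lam i E`.
def TermAvoids (ε a lam : ℝ) (i : ℕ) (E : Set ℝ) : Prop :=
  ∀ x ∈ E, ε * lam ≤ |x - (a + i * lam)|

section TermAvoids

variable {ε a lam : ℝ} {i : ℕ} {E F : Set ℝ}

theorem TermAvoids.mono (h : TermAvoids ε a lam i E) (hFE : F ⊆ E) : TermAvoids ε a lam i F :=
  fun x hx => h x (hFE hx)

theorem TermAvoids.union (hE : TermAvoids ε a lam i E) (hF : TermAvoids ε a lam i F) :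
    TermAvoids ε a lam i (E ∪ F) :=
  fun x hx => hx.elim (hE x) (hF x)

theorem termAvoids_of_subset_Icc {p q : ℝ} (hE : E ⊆ Icc p q)
    (hi : a + i * lam ∉ Ioo (p - ε * lam) (q + ε * lam)) : TermAvoids ε a lam i E := by
  intro x hx
  obtain ⟨hpx, hxq⟩ := hE hx
  rw [mem_Ioo, not_and_or, not_lt, not_lt] at hi
  rw [le_abs']
  rcases hi with hi | hi
  · right; linarith
  · left; linarith

end TermAvoids

section Avoids

variable {k : ℕ} {ε : ℝ} {E F : Set ℝ}

theorem avoids_empty (hk : 0 < k) (ε : ℝ) : Avoids k ε ∅ :=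
  fun _ _ _ => ⟨0, hk, fun _ h => h.elim⟩

theorem Avoids.mono (h : Avoids k ε E) (hFE : F ⊆ E) : Avoids k ε F :=
  fun a lam hlam => (h a lam hlam).imp fun _ ⟨hi, hfar⟩ => ⟨hi, TermAvoids.mono hfar hFE⟩

theorem Avoids.closure (h : Avoids k ε E) : Avoids k ε (closure E) := by
  intro a lam hlam
  obtain ⟨i, hi, hfar⟩ := h a lam hlam
  exact ⟨i, hi, closure_minimal hfar (isClosed_le continuous_const (by fun_prop) :
    IsClosed {x : ℝ | ε * lam ≤ |x - (a + i * lam)|})⟩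

theorem Avoids.image_mul_add (h : Avoids k ε E) {c : ℝ} (hc : 0 < c) (d : ℝ) :
    Avoids k ε ((fun x => c * x + d) '' E) := by
  intro a lam hlam
  obtain ⟨i, hi, hfar⟩ := h ((a - d) / c) (lam / c) (div_pos hlam hc)
  refine ⟨i, hi, ?_⟩
  rintro _ ⟨x, hx, rfl⟩
  have hscale : c * x + d - (a + i * lam) = c * (x - ((a - d) / c + i * (lam / c))) := by
    field_simp
    ring
  calc ε * lam = c * (ε * (lam / c)) := by field_simp
    _ ≤ c * |x - ((a - d) / c + i * (lam / c))| := mul_le_mul_of_nonneg_left (hfar x hx) hc.le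
    _ = |c * x + d - (a + i * lam)| := by rw [hscale, abs_mul, abs_of_pos hc]

end Avoids

theorem dimH_image_mul_add {c : ℝ} (hc : c ≠ 0) (d : ℝ) (E : Set ℝ) :
    dimH ((fun x => c * x + d) '' E) = dimH E := by
  have : (fun x : ℝ => c * x + d) =
      IsometryEquiv.addRight d ∘ ContinuousLinearEquiv.unitsEquivAut ℝ (Units.mk0 c hc) := by
    ext x
    simp [mul_comm]
  rw [this, image_comp, IsometryEquiv.dimH_image, ContinuousLinearEquiv.dimH_image]

theorem card_filter_apTerm_mem_Ioo_le (k m : ℕ) {a lam u v : ℝ} (hlam : 0 < lam)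
    (huv : v - u ≤ m * lam) :
    ((Finset.range k).filter fun i : ℕ => a + i * lam ∈ Ioo u v).card ≤ m := by
  set S := (Finset.range k).filter fun i : ℕ => a + i * lam ∈ Ioo u v
  rcases S.eq_empty_or_nonempty with hS | hS
  · simp [hS]
  set j := S.min' hS
  have hj : u < a + j * lam := (Finset.mem_filter.1 (S.min'_mem hS)).2.1
  have hsub : S ⊆ Finset.Ico j (j + m) := by
    intro i hiS
    have hi : a + i * lam < v := (Finset.mem_filter.1 hiS).2.2
    have hlt : (i : ℝ) < j + m := by
      have : ((i : ℝ) - j) * lam < m * lam := by linarith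
      linarith [lt_of_mul_lt_mul_right this hlam.le]
    exact Finset.mem_Ico.2 ⟨S.min'_le i hiS, by exact_mod_cast hlt⟩
  simpa using Finset.card_le_card hsub

theorem exists_apTerm_notMem_Ioo_Ioo {k m₁ m₂ : ℕ} (hk : m₁ + m₂ < k) {a lam u₁ v₁ u₂ v₂ : ℝ}
    (hlam : 0 < lam) (h₁ : v₁ - u₁ ≤ m₁ * lam) (h₂ : v₂ - u₂ ≤ m₂ * lam) :
    ∃ i < k, a + i * lam ∉ Ioo u₁ v₁ ∧ a + i * lam ∉ Ioo u₂ v₂ := by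
  by_contra! hcover
  have hsub : Finset.range k ⊆ ((Finset.range k).filter fun i : ℕ => a + i * lam ∈ Ioo u₁ v₁) ∪
      ((Finset.range k).filter fun i : ℕ => a + i * lam ∈ Ioo u₂ v₂) := by
    intro i hi
    have := hcover i (Finset.mem_range.1 hi)
    by_cases h : a + i * lam ∈ Ioo u₁ v₁ <;> simp_all
  have : k ≤ m₁ + m₂ := calc
    k = (Finset.range k).card := (Finset.card_range k).symm
    _ ≤ _ := (Finset.card_le_card hsub).trans (Finset.card_union_le _ _)
    _ ≤ m₁ + m₂ := add_le_add (card_filter_apTerm_mem_Ioo_le k m₁ hlam h₁)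
      (card_filter_apTerm_mem_Ioo_le k m₂ hlam h₂)
  omega

theorem avoids_singleton {k m : ℕ} {ε : ℝ} (hεm : 2 * ε ≤ m) (hmk : m < k) (x : ℝ) :
    Avoids k ε {x} := by
  intro a lam hlam
  obtain ⟨i, hi, hfar, -⟩ := exists_apTerm_notMem_Ioo_Ioo (by omega : m + 0 < k) hlam (a := a)
    (u₁ := x - ε * lam) (v₁ := x + ε * lam) (u₂ := x) (v₂ := x) (by nlinarith) (by simp)
  exact ⟨i, hi, termAvoids_of_subset_Icc (singleton_subset_iff.2 (left_mem_Icc.2 le_rfl)) hfar⟩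

theorem exists_termAvoids_union_Icc {k m : ℕ} {ε a lam p c u T : ℝ} {A : Set ℝ}
    (hε : ε ≤ 1) (hεm : 2 * ε ≤ m) (hmk : 2 * m < k) (hlam : 0 < lam)
    (hA : Avoids k ε A) (hAsub : A ⊆ Icc p (p + c))
    (hc : (k + 1) * c ≤ (m - 2 * ε) * (p - T)) (hT : (k + 1) * (T - u) ≤ (m - 2 * ε) * (p - T))
    (hnear : ∃ j < k, ¬ TermAvoids ε a lam j A) :
    ∃ i < k, TermAvoids ε a lam i (A ∪ Icc u T) := by
  have hk : (0 : ℝ) < k + 1 := by positivity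
  by_cases hsmall : (k + 1) * lam ≤ p - T
  · -- the term of the AP avoiding `A` lies within `k * lam` of `A`, hence far above `T`
    obtain ⟨i, hi, hfar⟩ := hA a lam hlam
    obtain ⟨j, hj, w, hw, hwj⟩ : ∃ j < k, ∃ w ∈ A, |w - (a + j * lam)| < ε * lam := by
      simpa [TermAvoids] using hnear
    have hij : (j : ℝ) - i ≤ k - 1 := by
      have : (j : ℝ) + 1 ≤ k := by exact_mod_cast hj
      linarith [(Nat.cast_nonneg i : (0 : ℝ) ≤ i)]
    have hεlam : ε * lam ≤ lam := mul_le_of_le_one_left hlam.le hε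
    refine ⟨i, hi, TermAvoids.union hfar (termAvoids_of_subset_Icc subset_rfl fun hmem => ?_)⟩
    have := mul_le_mul_of_nonneg_right hij hlam.le
    linarith [(hAsub hw).1, (abs_lt.1 hwj).2, hmem.2]
  · -- `A` and `Icc u T` have `ελ`-neighbourhoods of length at most `m * lam`, which together
    -- contain at most `2m < k` terms
    push Not at hsmall
    have hlarge : (m - 2 * ε) * (p - T) ≤ (k + 1) * ((m - 2 * ε) * lam) := by
      nlinarith
    have hc' : c ≤ (m - 2 * ε) * lam := le_of_mul_le_mul_left (hc.trans hlarge) hk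
    have hT' : T - u ≤ (m - 2 * ε) * lam := le_of_mul_le_mul_left (hT.trans hlarge) hk
    obtain ⟨i, hi, hiA, hiT⟩ := exists_apTerm_notMem_Ioo_Ioo (by omega : m + m < k) hlam (a := a)
      (u₁ := p - ε * lam) (v₁ := p + c + ε * lam) (u₂ := u - ε * lam) (v₂ := T + ε * lam)
      (by linarith) (by linarith)
    exact ⟨i, hi, (termAvoids_of_subset_Icc hAsub hiA).union
      (termAvoids_of_subset_Icc subset_rfl hiT)⟩

theorem avoids_insert_zero_iUnion {k m : ℕ} {ε : ℝ} (hε : ε ≤ 1) (hεm : 2 * ε ≤ m)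
    (hmk : 2 * m < k) {K : ℕ → Set ℝ} {b c T : ℕ → ℝ} (hKav : ∀ n, Avoids k ε (K n))
    (hK : ∀ n, K n ⊆ Icc (b n) (b n + c n)) (htail : ∀ n n', n < n' → K n' ⊆ Icc 0 (T n))
    (hT0 : ∀ n, 0 ≤ T n) (hc : ∀ n, (k + 1) * c n ≤ (m - 2 * ε) * (b n - T n))
    (hT : ∀ n, (k + 1) * T n ≤ (m - 2 * ε) * (b n - T n)) :
    Avoids k ε (insert 0 (⋃ n, K n)) := by
  classical
  intro a lam hlam
  by_cases hnear : ∃ n, ∃ j < k, ¬ TermAvoids ε a lam j (K n)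
  · set n := Nat.find hnear
    obtain ⟨i, hi, hfar⟩ := exists_termAvoids_union_Icc hε hεm hmk hlam (hKav n) (hK n) (hc n)
      (u := 0) (by simpa using hT n) (Nat.find_spec hnear)
    refine ⟨i, hi, ?_⟩
    rintro x (rfl | hx)
    · exact hfar 0 (Or.inr ⟨le_rfl, hT0 n⟩)
    obtain ⟨n', hx⟩ := mem_iUnion.1 hx
    rcases lt_trichotomy n' n with h | rfl | h
    · have := Nat.find_min hnear h
      push Not at this
      exact this i hi x hx
    · exact hfar x (Or.inl hx)
    · exact hfar x (Or.inr (htail _ n' h hx))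
  · push Not at hnear
    obtain ⟨i, hi, hfar⟩ := avoids_singleton (k := k) hεm (by omega) 0 a lam hlam
    refine ⟨i, hi, ?_⟩
    rintro x (rfl | hx)
    · exact hfar 0 rfl
    obtain ⟨n, hx⟩ := mem_iUnion.1 hx
    exact hnear n i hi x hx

theorem isCompact_insert_iUnion {X : Type*} [TopologicalSpace X] {K : ℕ → Set X} {x : X}
    (hK : ∀ n, IsCompact (K n)) (hlim : ∀ U ∈ 𝓝 x, ∀ᶠ n in atTop, K n ⊆ U) :
    IsCompact (insert x (⋃ n, K n)) := by
  intro l hne hle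
  by_cases hx : ClusterPt x l
  · exact ⟨x, Or.inl rfl, hx⟩
  simp only [clusterPt_iff_nonempty, not_forall, ← not_disjoint_iff_nonempty_inter,
    not_not] at hx
  obtain ⟨U, hU, V, hV, hUV⟩ := hx
  obtain ⟨N, hN⟩ := eventually_atTop.1 (hlim U hU)
  -- away from the neighbourhood `U` of `x`, only the finitely many pieces `K n`, `n < N`, remain
  have hhead : ⋃ n < N, K n ∈ l := by
    filter_upwards [hV, le_principal_iff.1 hle] with y hyV hy
    rcases hy with rfl | hy
    · exact (hUV.le_bot ⟨mem_of_mem_nhds hU, hyV⟩).elim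
    obtain ⟨n, hn⟩ := mem_iUnion.1 hy
    exact mem_biUnion (not_le.1 fun hNn => hUV.le_bot ⟨hN n hNn hn, hyV⟩) hn
  obtain ⟨y, hy, hyl⟩ := ((finite_lt_nat N).isCompact_biUnion fun n _ => hK n)
    (le_principal_iff.2 hhead)
  exact ⟨y, Or.inr (iUnion₂_subset_iUnion _ _ hy), hyl⟩

theorem isCompact_insert_iUnion_of_subset_closedBall {X : Type*} [PseudoMetricSpace X]
    {K : ℕ → Set X} {x : X} {r : ℕ → ℝ} (hK : ∀ n, IsCompact (K n))
    (hr : Tendsto r atTop (𝓝 0)) (hKr : ∀ n, K n ⊆ Metric.closedBall x (r n)) :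
    IsCompact (insert x (⋃ n, K n)) := by
  refine isCompact_insert_iUnion hK fun U hU => ?_
  obtain ⟨δ, hδ, hball⟩ := Metric.mem_nhds_iff.1 hU
  filter_upwards [hr.eventually (gt_mem_nhds hδ)] with n hn
  exact (hKr n).trans ((Metric.closedBall_subset_ball hn).trans hball)

def geometricUnion (t : ℝ) (G : ℕ → Set ℝ) : Set ℝ :=
  insert 0 (⋃ n, (fun x => t ^ (n + 2) * x + t ^ (n + 1)) '' G n)

section geometricUnion

variable {t : ℝ} {G : ℕ → Set ℝ}

theorem image_subset_Icc_pow (ht : 0 ≤ t) {n : ℕ} (hG : G n ⊆ Icc 0 1) :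
    (fun x => t ^ (n + 2) * x + t ^ (n + 1)) '' G n ⊆
      Icc (t ^ (n + 1)) (t ^ (n + 1) + t ^ (n + 2)) := by
  rintro _ ⟨x, hx, rfl⟩
  obtain ⟨hx0, hx1⟩ := hG hx
  have := pow_nonneg ht (n + 2)
  constructor <;> nlinarith

theorem isCompact_geometricUnion (ht0 : 0 < t) (ht1 : t < 1) (hGc : ∀ n, IsCompact (G n))
    (hG : ∀ n, G n ⊆ Icc 0 1) : IsCompact (geometricUnion t G) := by
  have hr : Tendsto (fun n : ℕ => 2 * t ^ (n + 1)) atTop (𝓝 0) := by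
    simpa using ((tendsto_pow_atTop_nhds_zero_of_lt_one ht0.le ht1).comp
      (tendsto_add_atTop_nat 1)).const_mul 2
  refine isCompact_insert_iUnion_of_subset_closedBall (fun n => (hGc n).image (by fun_prop))
    hr fun n => (image_subset_Icc_pow ht0.le (hG n)).trans ?_
  have := pow_le_pow_of_le_one ht0.le ht1.le (Nat.le_add_right (n + 1) 1)
  rw [Real.closedBall_eq_Icc]
  exact Icc_subset_Icc (by linarith [pow_pos ht0 (n + 1)]) (by linarith)

theorem geometricUnion_subset_Icc (ht0 : 0 ≤ t) (ht : t ≤ 1 / 2) (hG : ∀ n, G n ⊆ Icc 0 1) :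
    geometricUnion t G ⊆ Icc 0 1 := by
  refine insert_subset ⟨le_rfl, zero_le_one⟩ (iUnion_subset fun n =>
    (image_subset_Icc_pow ht0 (hG n)).trans (Icc_subset_Icc (by positivity) ?_))
  have h₁ : t ^ (n + 1) ≤ t ^ 1 := pow_le_pow_of_le_one ht0 (by linarith) (by omega)
  have h₂ : t ^ (n + 2) ≤ t ^ 1 := pow_le_pow_of_le_one ht0 (by linarith) (by omega)
  rw [pow_one] at h₁ h₂
  linarith

theorem dimH_geometricUnion (ht0 : 0 < t) : dimH (geometricUnion t G) = ⨆ n, dimH (G n) := by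
  rw [geometricUnion, insert_eq, dimH_union, dimH_singleton, dimH_iUnion, max_eq_right zero_le]
  exact iSup_congr fun n => dimH_image_mul_add (pow_pos ht0 _).ne' _ _

theorem avoids_geometricUnion {k m : ℕ} {ε : ℝ} (hε : ε ≤ 1) (hεm : 2 * ε ≤ m) (hmk : 2 * m < k)
    (ht0 : 0 < t) (ht1 : t ≤ 1) (hsep : (k + 1) * (2 * t) ≤ (m - 2 * ε) * (1 - 2 * t))
    (hG : ∀ n, G n ⊆ Icc 0 1) (hGav : ∀ n, Avoids k ε (G n)) :
    Avoids k ε (geometricUnion t G) := by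
  have hpow : ∀ {n n' : ℕ}, n ≤ n' → t ^ n' ≤ t ^ n := fun h => pow_le_pow_of_le_one ht0.le ht1 h
  have hKsep : ∀ n,
      (k + 1) * (2 * t ^ (n + 2)) ≤ (m - 2 * ε) * (t ^ (n + 1) - 2 * t ^ (n + 2)) := by
    intro n
    have := mul_le_mul_of_nonneg_left hsep (pow_pos ht0 (n + 1)).le
    rw [pow_succ t (n + 1)]
    linarith
  refine avoids_insert_zero_iUnion hε hεm hmk (fun n => (hGav n).image_mul_add (pow_pos ht0 _) _)
    (fun n => image_subset_Icc_pow ht0.le (hG n)) (T := fun n => 2 * t ^ (n + 2))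
    (fun n n' h => (image_subset_Icc_pow ht0.le (hG n')).trans
      (Icc_subset_Icc (pow_pos ht0 _).le ?_)) (fun n => by positivity)
    (fun n => le_trans (by nlinarith [pow_pos ht0 (n + 2)]) (hKsep n)) hKsep
  have h₁ : t ^ (n' + 1) ≤ t ^ (n + 2) := hpow (by omega)
  have h₂ : t ^ (n' + 2) ≤ t ^ (n + 2) := hpow (by omega)
  linarith

end geometricUnion

theorem exists_isCompact_avoids_dimH_eq_iSup {k m : ℕ} {ε : ℝ} (hε : ε ≤ 1) (hεm : 2 * ε < m)
    (hmk : 2 * m < k) {G : ℕ → Set ℝ}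
    (hG : ∀ n, IsCompact (G n) ∧ G n ⊆ Icc 0 1 ∧ Avoids k ε (G n)) :
    ∃ E : Set ℝ, IsCompact E ∧ E ⊆ Icc 0 1 ∧ Avoids k ε E ∧ dimH E = ⨆ n, dimH (G n) := by
  obtain ⟨t, ht0, ht, hsep⟩ :
      ∃ t : ℝ, 0 < t ∧ t ≤ 1 / 2 ∧ (k + 1) * (2 * t) ≤ (m - 2 * ε) * (1 - 2 * t) := by
    have hδ : 0 < (m : ℝ) - 2 * ε := by linarith
    refine ⟨(m - 2 * ε) / (2 * (k + 1 + (m - 2 * ε))), by positivity, ?_, ?_⟩ <;>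
      rw [div_eq_mul_inv] <;> field_simp <;> nlinarith
  exact ⟨geometricUnion t G,
    isCompact_geometricUnion ht0 (by linarith) (fun n => (hG n).1) (fun n => (hG n).2.1),
    geometricUnion_subset_Icc ht0.le ht (fun n => (hG n).2.1),
    avoids_geometricUnion hε hεm.le hmk ht0 (by linarith) hsep (fun n => (hG n).2.1)
      (fun n => (hG n).2.2),
    dimH_geometricUnion ht0⟩

theorem exists_isCompact_subset_Icc_of_avoids {k : ℕ} {ε : ℝ} {S : Set ℝ}
    (hS : Bornology.IsBounded S) (hA : Avoids k ε S) :
    ∃ G : Set ℝ, IsCompact G ∧ G ⊆ Icc 0 1 ∧ Avoids k ε G ∧ dimH S ≤ dimH G := by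
  obtain ⟨r, hr, hSr⟩ := hS.subset_closedBall_lt 0 0
  have hcl : closure S ⊆ Icc (-r) r := by
    simpa [Real.closedBall_eq_Icc] using closure_minimal hSr Metric.isClosed_closedBall
  refine ⟨(fun x => (2 * r)⁻¹ * x + 1 / 2) '' closure S, hS.isCompact_closure.image (by fun_prop),
    ?_, hA.closure.image_mul_add (by positivity) _,
    (dimH_mono subset_closure).trans (dimH_image_mul_add (by positivity) _ _).ge⟩
  rintro _ ⟨x, hx, rfl⟩
  obtain ⟨h₁, h₂⟩ := hcl hx
  simp only [mem_Icc, ← div_eq_inv_mul]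
  constructor
  · have : -(1 / 2) ≤ x / (2 * r) := by rw [le_div_iff₀ (by positivity)]; linarith
    linarith
  · have : x / (2 * r) ≤ 1 / 2 := by rw [div_le_iff₀ (by positivity)]; linarith
    linarith

theorem exists_seq_iSup_eq {α ι : Type*} [CompleteLinearOrder α] [TopologicalSpace α]
    [OrderTopology α] [FirstCountableTopology α] [Nonempty ι] (f : ι → α) :
    ∃ s : ℕ → ι, ⨆ n, f (s n) = ⨆ i, f i := by
  obtain ⟨u, hmono, hlim, hmem⟩ :=
    exists_seq_tendsto_sSup (range_nonempty f) (OrderTop.bddAbove _)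
  choose s hs using hmem
  refine ⟨s, ?_⟩
  simp only [hs, ← sSup_range]
  exact tendsto_nhds_unique (tendsto_atTop_iSup hmono) hlim

theorem exists_seq_iSup_dimH_eq_dAvoid {k : ℕ} (hk : 0 < k) (ε : ℝ) :
    ∃ G : ℕ → Set ℝ, (∀ n, IsCompact (G n) ∧ G n ⊆ Icc 0 1 ∧ Avoids k ε (G n)) ∧
      ⨆ n, dimH (G n) = dAvoid k ε := by
  have : Nonempty {E : Set ℝ // Bornology.IsBounded E ∧ Avoids k ε E} :=
    ⟨⟨∅, Bornology.isBounded_empty, avoids_empty hk ε⟩⟩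
  obtain ⟨s, hs⟩ := exists_seq_iSup_eq
    fun E : {E : Set ℝ // Bornology.IsBounded E ∧ Avoids k ε E} => dimH (E : Set ℝ)
  choose G hGc hGsub hGav hle using fun n =>
    exists_isCompact_subset_Icc_of_avoids (s n).2.1 (s n).2.2
  refine ⟨G, fun n => ⟨hGc n, hGsub n, hGav n⟩, le_antisymm ?_ ?_⟩
  · exact iSup_le fun n => le_iSup₂_of_le (f := fun E (_ : Bornology.IsBounded E ∧ Avoids k ε E) =>
      dimH E) (G n) ⟨(hGc n).isBounded, hGav n⟩ le_rfl
  · rw [dAvoid, iSup_subtype', ← hs]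
    exact iSup_mono hle

theorem not_avoids_of_two_pairs {k : ℕ} {ε : ℝ} {F : Set ℝ} (hk : k ≤ 4) (hε : 1 / 2 ≤ ε)
    {p₁ p₂ q₁ q₂ : ℝ} (hp₁ : p₁ ∈ F) (hp₂ : p₂ ∈ F) (hq₁ : q₁ ∈ F) (hq₂ : q₂ ∈ F)
    (hp : p₁ < p₂) (hq : q₁ < q₂) (hpgap : p₂ - p₁ < (q₁ + q₂) / 2 - (p₁ + p₂) / 2)
    (hqgap : q₂ - q₁ < (q₁ + q₂) / 2 - (p₁ + p₂) / 2) : ¬ Avoids k ε F := by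
  set lam := ((q₁ + q₂) / 2 - (p₁ + p₂) / 2) / 2 with hlam_def
  have hlam : 0 < lam := by linarith [hlam_def]
  intro hA
  obtain ⟨i, hi, hfar⟩ := hA ((p₁ + p₂) / 2 - lam / 2) lam hlam
  have hi4 : i < 4 := by omega
  obtain ⟨x, hx, hclose⟩ : ∃ x ∈ F, |x - ((p₁ + p₂) / 2 - lam / 2 + i * lam)| < lam / 2 := by
    interval_cases i
    · exact ⟨p₁, hp₁, by rw [abs_lt]; constructor <;> push_cast <;> linarith [hlam_def]⟩
    · exact ⟨p₂, hp₂, by rw [abs_lt]; constructor <;> push_cast <;> linarith [hlam_def]⟩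
    · exact ⟨q₁, hq₁, by rw [abs_lt]; constructor <;> push_cast <;> linarith [hlam_def]⟩
    · exact ⟨q₂, hq₂, by rw [abs_lt]; constructor <;> push_cast <;> linarith [hlam_def]⟩
  have := hfar x hx
  nlinarith

theorem exists_lt_mem_Ioo_of_accPt {D : Set ℝ} {x δ : ℝ} (hx : x ∈ D) (hacc : AccPt x (𝓟 D))
    (hδ : 0 < δ) : ∃ p₁ ∈ D, ∃ p₂ ∈ D, p₁ < p₂ ∧ x - δ < p₁ ∧ p₂ < x + δ := by
  obtain ⟨z, ⟨hzx, hz⟩, hne⟩ :=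
    accPt_iff_nhds.1 hacc (Ioo (x - δ) (x + δ)) (Ioo_mem_nhds (by linarith) (by linarith))
  rcases hne.lt_or_gt with h | h
  · exact ⟨z, hz, x, hx, h, hzx.1, by linarith⟩
  · exact ⟨x, hx, z, hz, h, by linarith, hzx.2⟩

theorem Perfect.not_avoids {k : ℕ} {ε : ℝ} {D : Set ℝ} (hD : Perfect D) (hne : D.Nonempty)
    (hk : k ≤ 4) (hε : 1 / 2 ≤ ε) : ¬ Avoids k ε D := by
  obtain ⟨x, hx⟩ := hne
  obtain ⟨y, ⟨-, hy⟩, hyx⟩ := accPt_iff_nhds.1 (hD.acc x hx) univ univ_mem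
  obtain ⟨x, hx, y, hy, hxy⟩ := (show D.Nontrivial from ⟨x, hx, y, hy, hyx.symm⟩).exists_lt
  have hδ : 0 < (y - x) / 4 := by linarith
  obtain ⟨p₁, hp₁, p₂, hp₂, hp, hp₁x, hp₂x⟩ := exists_lt_mem_Ioo_of_accPt hx (hD.acc x hx) hδ
  obtain ⟨q₁, hq₁, q₂, hq₂, hq, hq₁y, hq₂y⟩ := exists_lt_mem_Ioo_of_accPt hy (hD.acc y hy) hδ
  exact not_avoids_of_two_pairs hk hε hp₁ hp₂ hq₁ hq₂ hp hq (by linarith) (by linarith)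

theorem IsClosed.countable_of_avoids {k : ℕ} {ε : ℝ} {F : Set ℝ} (hF : IsClosed F)
    (hA : Avoids k ε F) (hk : k ≤ 4) (hε : 1 / 2 ≤ ε) : F.Countable := by
  by_contra hunc
  obtain ⟨D, hD, hne, hDF⟩ := exists_perfect_nonempty_of_isClosed_of_not_countable hF hunc
  exact hD.not_avoids hne hk hε (hA.mono hDF)

theorem dAvoid_eq_zero {k : ℕ} {ε : ℝ} (hk : k ≤ 4) (hε : 1 / 2 ≤ ε) : dAvoid k ε = 0 :=
  le_antisymm (iSup₂_le fun _ hE => (dimH_mono subset_closure).trans_eq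
    (isClosed_closure.countable_of_avoids hE.2.closure hk hε).dimH_zero) zero_le

theorem stmt9_general (k : ℕ) (hk : 3 ≤ k) (ε : ℝ) (hε1 : ε < 1) :
    ∃ E : Set ℝ, IsCompact E ∧ E ⊆ Set.Icc 0 1 ∧ Avoids k ε E ∧ dimH E = dAvoid k ε := by
  by_cases hε : ε < 1 / 2 ∨ 5 ≤ k
  · obtain ⟨m, hεm, hmk⟩ : ∃ m : ℕ, 2 * ε < m ∧ 2 * m < k := by
      rcases hε with hε | hk
      · exact ⟨1, by push_cast; linarith, by omega⟩
      · exact ⟨2, by push_cast; linarith, by omega⟩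
    obtain ⟨G, hG, hGsup⟩ := exists_seq_iSup_dimH_eq_dAvoid (by omega : 0 < k) ε
    obtain ⟨E, hE, hEsub, hEav, hEdim⟩ := exists_isCompact_avoids_dimH_eq_iSup hε1.le hεm hmk hG
    exact ⟨E, hE, hEsub, hEav, hEdim.trans hGsup⟩
  · push Not at hε
    refine ⟨∅, isCompact_empty, empty_subset _, avoids_empty (by omega) ε, ?_⟩
    rw [dimH_empty, dAvoid_eq_zero (by omega) hε.1]

theorem stmt9 (k : ℕ) (hk : 3 ≤ k) (ε : ℝ) (hε0 : 0 < ε) (hε1 : ε < 1) :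
    ∃ E : Set ℝ, IsCompact E ∧ E ⊆ Set.Icc 0 1 ∧ Avoids k ε E ∧ dimH E = dAvoid k ε :=
  stmt9_general k hk ε hε1
end

section
/- Let M ≥ 1 and n ≥ 1 be integers with n ≤ M, let α ∈ (0,1), and let p_1, ..., p_n ∈ (0,1) satisfy p_1 + ⋯ + p_n ≤ α. If s ≥ 0 satisfies p_1^s + ⋯ + p_n^s = 1, then s ≤ log M / (log M − log α). Moreover, equality is attained when n = M and p_1 = ⋯ = p_M = α/M. -/
/-!
Since `Σ pᵢ ≤ α < 1`, the equation `Σ pᵢ ^ s = 1` forces `s < 1`, and then concavity of `x ↦ x ^ s`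
(Jensen with equal weights) gives `1 = Σ pᵢ ^ s ≤ n ^ (1 - s) (Σ pᵢ) ^ s ≤ M ^ (1 - s) α ^ s`.
Taking logarithms, `0 ≤ (1 - s) log M + s log α`, which is the bound. For `M` equal pieces of
size `α / M` both inequalities are equalities, and `M (α / M) ^ s = 1` solves to the bound itself.
-/

open Finset

namespace Real

theorem sum_rpow_le_card_rpow_mul_rpow_sum {ι : Type*} (t : Finset ι) {p : ι → ℝ}
    (hp : ∀ i ∈ t, 0 ≤ p i) {s : ℝ} (hs0 : 0 ≤ s) (hs1 : s ≤ 1) :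
    ∑ i ∈ t, p i ^ s ≤ (#t : ℝ) ^ (1 - s) * (∑ i ∈ t, p i) ^ s := by
  rcases t.eq_empty_or_nonempty with rfl | ht
  · simp only [sum_empty, card_empty, Nat.cast_zero]
    positivity
  have hn : (0 : ℝ) < #t := by exact_mod_cast ht.card_pos
  have hw : ∑ _i ∈ t, (#t : ℝ)⁻¹ = 1 := by
    rw [sum_const, nsmul_eq_mul, mul_inv_cancel₀ hn.ne']
  have jensen := (concaveOn_rpow hs0 hs1).le_map_sum (fun _ _ => inv_nonneg.2 hn.le) hw hp
  simp only [smul_eq_mul, ← mul_sum] at jensen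
  rw [mul_rpow (inv_nonneg.2 hn.le) (sum_nonneg hp), inv_rpow hn.le] at jensen
  calc ∑ i ∈ t, p i ^ s = #t * ((#t : ℝ)⁻¹ * ∑ i ∈ t, p i ^ s) := by field_simp
    _ ≤ #t * (((#t : ℝ) ^ s)⁻¹ * (∑ i ∈ t, p i) ^ s) := by gcongr
    _ = (#t : ℝ) ^ (1 - s) * (∑ i ∈ t, p i) ^ s := by
      rw [rpow_sub hn, rpow_one]
      ring

theorem lt_one_of_sum_rpow_eq_one {ι : Type*} {t : Finset ι} {p : ι → ℝ}
    (hp : ∀ i ∈ t, 0 ≤ p i) (hsum : ∑ i ∈ t, p i < 1) {s : ℝ} (h : ∑ i ∈ t, p i ^ s = 1) :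
    s < 1 := by
  by_contra! hs
  have hle : ∑ i ∈ t, p i ^ s ≤ ∑ i ∈ t, p i := sum_le_sum fun i hi =>
    rpow_le_self_of_le_one (hp i hi)
      ((single_le_sum hp hi).trans hsum.le) hs
  linarith

theorem le_log_div_log_sub_log_of_one_le_rpow_mul_rpow {M α s : ℝ} (hM : 1 ≤ M)
    (hα0 : 0 < α) (hα1 : α < 1) (h : 1 ≤ M ^ (1 - s) * α ^ s) :
    s ≤ log M / (log M - log α) := by
  have hlogM : 0 ≤ log M := log_nonneg hM
  have hD : 0 < log M - log α := by linarith [log_neg hα0 hα1]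
  have hlog : 0 ≤ (1 - s) * log M + s * log α := by
    have hM0 : 0 < M := by linarith
    have := log_nonneg h
    rwa [log_mul (rpow_pos_of_pos hM0 _).ne' (rpow_pos_of_pos hα0 _).ne', log_rpow hM0,
      log_rpow hα0] at this
  rw [le_div_iff₀ hD]
  linarith

theorem le_log_div_log_sub_log_of_sum_rpow_eq_one {ι : Type*} [Fintype ι] {M α : ℝ}
    (hM : 1 ≤ M) (hcard : (Fintype.card ι : ℝ) ≤ M) (hα0 : 0 < α) (hα1 : α < 1)
    {p : ι → ℝ} (hp : ∀ i, 0 ≤ p i) (hsum : ∑ i, p i ≤ α)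
    {s : ℝ} (hs : 0 ≤ s) (h : ∑ i, p i ^ s = 1) :
    s ≤ log M / (log M - log α) := by
  have hs1 : s < 1 := lt_one_of_sum_rpow_eq_one (fun i _ => hp i) (hsum.trans_lt hα1) h
  refine le_log_div_log_sub_log_of_one_le_rpow_mul_rpow hM hα0 hα1 ?_
  calc 1 = ∑ i, p i ^ s := h.symm
    _ ≤ (Fintype.card ι : ℝ) ^ (1 - s) * (∑ i, p i) ^ s :=
      sum_rpow_le_card_rpow_mul_rpow_sum univ (fun i _ => hp i) hs hs1.le
    _ ≤ M ^ (1 - s) * α ^ s := by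
      have hsum0 : 0 ≤ ∑ i, p i := sum_nonneg fun i _ => hp i
      gcongr

theorem eq_log_div_log_sub_log_of_mul_div_rpow_eq_one {M α s : ℝ} (hM : 1 ≤ M)
    (hα0 : 0 < α) (hα1 : α < 1) (h : M * (α / M) ^ s = 1) :
    s = log M / (log M - log α) := by
  have hM0 : 0 < M := by linarith
  have hD : 0 < log M - log α := by linarith [log_nonneg hM, log_neg hα0 hα1]
  have hlog := congrArg log h
  rw [log_mul hM0.ne' (by positivity), log_rpow (by positivity), log_div hα0.ne' hM0.ne',
    log_one] at hlog
  rw [eq_div_iff hD.ne']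
  linarith

end Real

theorem stmt13_general (M n : ℕ) (hM : 1 ≤ M) (hnM : n ≤ M)
    (α : ℝ) (hα : α ∈ Set.Ioo (0 : ℝ) 1) :
    (∀ p : Fin n → ℝ, (∀ i, p i ∈ Set.Ioo (0 : ℝ) 1) → (∑ i, p i) ≤ α →
      ∀ s : ℝ, 0 ≤ s → (∑ i, p i ^ s) = 1 →
        s ≤ Real.log M / (Real.log M - Real.log α)) ∧
    (∀ s : ℝ, 0 ≤ s → (∑ _i : Fin M, (α / M) ^ s) = 1 →
        s = Real.log M / (Real.log M - Real.log α)) := by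
  have hM' : (1 : ℝ) ≤ M := by exact_mod_cast hM
  refine ⟨fun p hp hsum s hs h => ?_, fun s _ h => ?_⟩
  · exact Real.le_log_div_log_sub_log_of_sum_rpow_eq_one hM' (by simpa using hnM) hα.1 hα.2
      (fun i => (hp i).1.le) hsum hs h
  · rw [sum_const, card_univ, Fintype.card_fin, nsmul_eq_mul] at h
    exact Real.eq_log_div_log_sub_log_of_mul_div_rpow_eq_one hM' hα.1 hα.2 h

theorem stmt13 (M n : ℕ) (hM : 1 ≤ M) (hn : 1 ≤ n) (hnM : n ≤ M)
    (α : ℝ) (hα : α ∈ Set.Ioo (0 : ℝ) 1) :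
    (∀ p : Fin n → ℝ, (∀ i, p i ∈ Set.Ioo (0 : ℝ) 1) → (∑ i, p i) ≤ α →
      ∀ s : ℝ, 0 ≤ s → (∑ i, p i ^ s) = 1 →
        s ≤ Real.log M / (Real.log M - Real.log α)) ∧
    (∀ s : ℝ, 0 ≤ s → (∑ _i : Fin M, (α / M) ^ s) = 1 →
        s = Real.log M / (Real.log M - Real.log α)) :=
  stmt13_general M n hM hnM α hα
end
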